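/- arXiv:2401.09723 — 4 statements merged into one kernel-verified Lean document; each statement's English description precedes it below -/
import Mathlib

section
/- Let P be a finite poset with n elements, x a minimal element of P, and b ≥ a ≥ 1 integers. Let Q = y ⊕ C_{a−1} (a new element y in parallel with an (a−1)-chain), and set R = C_{b−a} <_y (Q <_x P). Then e(R−y) = e(P) + (a−1)·e(P−x), e(R) = b·e(R−y) + a·e(P−x), |R| = n + b, and width(R) ≤ max{width(P), 3}. -/
/-- The number of linear extensions of the finite poset `(α, O)`. -/
noncomputable def eCount (α : Type) [Fintype α] (O : PartialOrder α) : ℕ :=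
  Nat.card {f : α ≃ Fin (Fintype.card α) // ∀ a b : α, O.le a b → f a ≤ f b}

/-- The induced order on `P − x`. -/
def delOrder {α : Type} (O : PartialOrder α) (x : α) : PartialOrder {a : α // a ≠ x} where
  le a b := O.le a.1 b.1
  lt a b := O.le a.1 b.1 ∧ ¬ O.le b.1 a.1
  lt_iff_le_not_ge := fun _ _ => Iff.rfl
  le_refl a := O.le_refl a.1
  le_trans a b c := O.le_trans a.1 b.1 c.1
  le_antisymm a b h h' := Subtype.ext (O.le_antisymm a.1 b.1 h h')

/-- The number of linear extensions of `P − x`. -/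
noncomputable def eDel (α : Type) [Fintype α] [DecidableEq α] (O : PartialOrder α) (x : α) : ℕ :=
  eCount {a : α // a ≠ x} (delOrder O x)

/-- `x` is a minimal element of the poset `(α, O)`. -/
def isMinimal {α : Type} (O : PartialOrder α) (x : α) : Prop :=
  ∀ a : α, O.le a x → a = x

/-- The width of a finite poset: the maximal size of an antichain. -/
noncomputable def pwidth (α : Type) [Fintype α] (O : PartialOrder α) : ℕ :=
  sSup {n : ℕ | ∃ s : Finset α,
    (∀ a ∈ s, ∀ b ∈ s, a ≠ b → ¬ O.le a b) ∧ s.card = n}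

/-- The underlying relation of the linear (ordinal) sum `P <| Q`:
elements of `α` are below all elements of `β`. -/
def linLE {α β : Type} (O : PartialOrder α) (O' : PartialOrder β) :
    α ⊕ β → α ⊕ β → Prop
  | .inl a, .inl a' => O.le a a'
  | .inr b, .inr b' => O'.le b b'
  | .inl _, .inr _ => True
  | .inr _, .inl _ => False

/-- The linear (ordinal) sum `P <| Q`. -/
def linOrder {α β : Type} (O : PartialOrder α) (O' : PartialOrder β) :
    PartialOrder (α ⊕ β) where
  le := linLE O O'
  lt a b := linLE O O' a b ∧ ¬ linLE O O' b a
  lt_iff_le_not_ge := fun _ _ => Iff.rfl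
  le_refl := by
    rintro (a | b)
    · exact O.le_refl a
    · exact O'.le_refl b
  le_trans := by
    rintro (a | a) (b | b) (c | c) h h' <;>
      first
        | exact h.elim
        | exact h'.elim
        | trivial
        | exact O.le_trans _ _ _ h h'
        | exact O'.le_trans _ _ _ h h'
  le_antisymm := by
    rintro (a | a) (b | b) h h' <;>
      first
        | exact h.elim
        | exact h'.elim
        | exact congrArg Sum.inl (O.le_antisymm _ _ h h')
        | exact congrArg Sum.inr (O'.le_antisymm _ _ h h')

/-- The relation of the parallel (disjoint) sum `P ⊕ Q`. -/
def parLE {α β : Type} (O : PartialOrder α) (O' : PartialOrder β) :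
    α ⊕ β → α ⊕ β → Prop
  | .inl a, .inl a' => O.le a a'
  | .inr b, .inr b' => O'.le b b'
  | .inl _, .inr _ => False
  | .inr _, .inl _ => False

/-- The parallel (disjoint) sum `P ⊕ Q`. -/
def parOrder {α β : Type} (O : PartialOrder α) (O' : PartialOrder β) :
    PartialOrder (α ⊕ β) where
  le := parLE O O'
  lt a b := parLE O O' a b ∧ ¬ parLE O O' b a
  lt_iff_le_not_ge := fun _ _ => Iff.rfl
  le_refl := by
    rintro (a | b)
    · exact O.le_refl a
    · exact O'.le_refl b
  le_trans := by
    rintro (a | a) (b | b) (c | c) h h' <;>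
      first
        | exact h.elim
        | exact h'.elim
        | exact O.le_trans _ _ _ h h'
        | exact O'.le_trans _ _ _ h h'
  le_antisymm := by
    rintro (a | a) (b | b) h h' <;>
      first
        | exact h.elim
        | exact h'.elim
        | exact congrArg Sum.inl (O.le_antisymm _ _ h h')
        | exact congrArg Sum.inr (O'.le_antisymm _ _ h h')

/-- The dual order. -/
def dualOrder {α : Type} (O : PartialOrder α) : PartialOrder α where
  le a b := O.le b a
  lt a b := O.le b a ∧ ¬ O.le a b
  lt_iff_le_not_ge := fun _ _ => Iff.rfl
  le_refl a := O.le_refl a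
  le_trans a b c h h' := O.le_trans c b a h' h
  le_antisymm a b h h' := O.le_antisymm a b h' h

/-- The relation of the hybrid sum `Q <_x P`, where `P` lives on `α` (the `inl`
component), `Q` lives on `β` (the `inr` component), and `x : α` is a (minimal)
element of `P`: every element of `Q` is below every element of `P` except `x`,
and `x` is incomparable to all of `Q`.  (For `x` minimal, `¬ a ≤ x ↔ a ≠ x`.) -/
def hybLE {α β : Type} (O : PartialOrder α) (O' : PartialOrder β) (x : α) :
    α ⊕ β → α ⊕ β → Prop
  | .inl a, .inl a' => O.le a a'
  | .inr b, .inr b' => O'.le b b'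
  | .inr _, .inl a => ¬ O.le a x
  | .inl _, .inr _ => False

/-- The hybrid sum `Q <_x P`. -/
def hybOrder {α β : Type} (O : PartialOrder α) (O' : PartialOrder β) (x : α) :
    PartialOrder (α ⊕ β) where
  le := hybLE O O' x
  lt a b := hybLE O O' x a b ∧ ¬ hybLE O O' x b a
  lt_iff_le_not_ge := fun _ _ => Iff.rfl
  le_refl := by
    rintro (a | b)
    · exact O.le_refl a
    · exact O'.le_refl b
  le_trans := by
    rintro (a | a) (b | b) (c | c) h h' <;>
      first
        | exact h.elim
        | exact h'.elim
        | exact h'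
        | exact O.le_trans _ _ _ h h'
        | exact O'.le_trans _ _ _ h h'
        | exact fun hc => h (O.le_trans _ _ _ h' hc)
  le_antisymm := by
    rintro (a | a) (b | b) h h' <;>
      first
        | exact h.elim
        | exact h'.elim
        | exact congrArg Sum.inl (O.le_antisymm _ _ h h')
        | exact congrArg Sum.inr (O'.le_antisymm _ _ h h')

/-- The carrier of the flip-flop poset built from `P` on `α` (with `x` removed),
`Q` on `β` (with `y` removed), and the two extra elements `z = Sum.inr false`
and `v = Sum.inr true`. -/
abbrev FlipCarrier (α β : Type) (x : α) (y : β) : Type :=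
  ({a : α // a ≠ x} ⊕ {b : β // b ≠ y}) ⊕ Bool

/-- The relation of the flip-flop poset: the dual order on `P − x`, the order on
`Q − y`; `p ≺ z` for `p` with `x ≺ p` in `P`; `z ≺ q` for `q` with `y ≺ q` in `Q`;
`p ≺ v ≺ q` for all `p ∈ P − x`, `q ∈ Q − y`; and `z, v` incomparable. -/
def ffLE {α β : Type} (O : PartialOrder α) (O' : PartialOrder β) (x : α) (y : β) :
    FlipCarrier α β x y → FlipCarrier α β x y → Prop
  | .inl (.inl p), .inl (.inl p') => O.le p'.1 p.1
  | .inl (.inr q), .inl (.inr q') => O'.le q.1 q'.1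
  | .inl (.inl _), .inl (.inr _) => True
  | .inl (.inr _), .inl (.inl _) => False
  | .inl (.inl _), .inr true => True
  | .inl (.inl p), .inr false => O.le x p.1
  | .inr true, .inl (.inr _) => True
  | .inr false, .inl (.inr q) => O'.le y q.1
  | .inl (.inr _), .inr _ => False
  | .inr _, .inl (.inl _) => False
  | .inr c, .inr c' => c = c'

/-- The flip-flop poset. -/
def ffOrder {α β : Type} (O : PartialOrder α) (O' : PartialOrder β) (x : α) (y : β) :
    PartialOrder (FlipCarrier α β x y) where
  le := ffLE O O' x y
  lt a b := ffLE O O' x y a b ∧ ¬ ffLE O O' x y b a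
  lt_iff_le_not_ge := fun _ _ => Iff.rfl
  le_refl := by
    rintro ((p | q) | (_ | _)) <;>
      first
        | exact O.le_refl _
        | exact O'.le_refl _
        | rfl
  le_trans := by
    rintro ((p | q) | (_ | _)) ((p' | q') | (_ | _)) ((p'' | q'') | (_ | _)) h h' <;>
      first
        | trivial
        | exact h.elim
        | exact h'.elim
        | exact O.le_trans _ _ _ h' h
        | exact O'.le_trans _ _ _ h h'
        | exact O.le_trans _ _ _ h h'
        | exact O'.le_trans _ _ _ h' h
        | simp_all
  le_antisymm := by
    rintro ((p | q) | (_ | _)) ((p' | q') | (_ | _)) h h' <;>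
      first
        | exact h.elim
        | exact h'.elim
        | rfl
        | exact congrArg (fun t => Sum.inl (Sum.inl t)) (Subtype.ext (O.le_antisymm _ _ h' h))
        | exact congrArg (fun t => Sum.inl (Sum.inr t)) (Subtype.ext (O'.le_antisymm _ _ h h'))
        | exact Bool.noConfusion h
        | simp_all

/-- The value of the simple continued fraction `[b₀; b₁, …, b_m]`. -/
def cfVal : List ℕ → ℚ
  | [] => 0
  | [b] => (b : ℚ)
  | b :: l => (b : ℚ) + (cfVal l)⁻¹

/-- `l = [b₀, b₁, …, b_m]` is an admissible simple continued fraction expansion: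
nonempty, `b₁, …, b_m ≥ 1`, and the last quotient is `≥ 2` when `m ≥ 1`.
(Such an expansion exists and is unique for every nonnegative rational.) -/
def cfAdmissible (l : List ℕ) : Prop :=
  l ≠ [] ∧ (∀ i : Fin l.length, 0 < i.1 → 1 ≤ l.get i) ∧
    (2 ≤ l.length → ∀ b ∈ l.getLast?, 2 ≤ b)

/-- `gcfAux a b m k` is the value of the tail
`[a_{i+1}, …, a_m ; b_i, …, b_m]` of the generalized continued fraction, where
`i = m - k`; thus `gcfAux a b m m = b₀ + a₁/(b₁ + a₂/(b₂ + ⋯ + a_m/b_m))`. -/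
def gcfAux (a b : ℕ → ℕ) (m : ℕ) : ℕ → ℚ
  | 0 => (b m : ℚ)
  | k + 1 => (b (m - (k + 1)) : ℚ) + (a (m - k) : ℚ) / gcfAux a b m k

/-- The numerators `C_i` of the generalized continued fraction, indexed so that
`gcfC a b m k = C_{m-k}`: they satisfy `C_m = b_m`, `D_m = 1`, `D_i = C_{i+1}`,
`C_i = b_i D_i + a_{i+1} D_{i+1}`. -/
def gcfC (a b : ℕ → ℕ) (m : ℕ) : ℕ → ℕ
  | 0 => b m
  | 1 => b (m - 1) * b m + a m
  | k + 2 => b (m - (k + 2)) * gcfC a b m (k + 1) + a (m - (k + 1)) * gcfC a b m k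

/-- The denominators `D_i`, indexed so that `gcfD a b m k = D_{m-k}`. -/
def gcfD (a b : ℕ → ℕ) (m : ℕ) : ℕ → ℕ
  | 0 => 1
  | k + 1 => gcfC a b m k


-- ### auxiliary development

def ExtSet (α : Type) [Fintype α] (O : PartialOrder α) : Type :=
  {f : α ≃ Fin (Fintype.card α) // ∀ a b : α, O.le a b → f a ≤ f b}

lemma eCount_eq (α : Type) [Fintype α] (O : PartialOrder α) :
    eCount α O = Nat.card (ExtSet α O) := rfl

instance (α : Type) [Fintype α] (O : PartialOrder α) : Finite (ExtSet α O) := by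
  unfold ExtSet; infer_instance

def sAV (i m : ℕ) : ℕ := if m < i then m else m + 1
def uSAV (i v : ℕ) : ℕ := if v < i then v else v - 1

lemma sAV_ge (i m : ℕ) : m ≤ sAV i m := by unfold sAV; split_ifs <;> omega
lemma sAV_le (i m : ℕ) : sAV i m ≤ m + 1 := by unfold sAV; split_ifs <;> omega
lemma sAV_ne (i m : ℕ) : sAV i m ≠ i := by unfold sAV; split_ifs <;> omega
lemma sAV_inj {i m m' : ℕ} (h : sAV i m = sAV i m') : m = m' := by
  unfold sAV at h; split_ifs at h <;> omega
lemma sAV_mono {i m m' : ℕ} (h : m ≤ m') : sAV i m ≤ sAV i m' := by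
  unfold sAV; split_ifs <;> omega
lemma sAV_gt_iff {i m : ℕ} : i < sAV i m ↔ i ≤ m := by unfold sAV; split_ifs <;> omega
lemma sAV_eq_of_le {i m : ℕ} (h : i ≤ m) : sAV i m = m + 1 := by unfold sAV; split_ifs <;> omega
lemma uSAV_inj {i v v' : ℕ} (h : uSAV i v = uSAV i v') (hv : v ≠ i) (hv' : v' ≠ i) : v = v' := by
  unfold uSAV at h; split_ifs at h <;> omega
lemma uSAV_mono {i v v' : ℕ} (hv : v ≠ i) (hv' : v' ≠ i) (h : v ≤ v') : uSAV i v ≤ uSAV i v' := by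
  unfold uSAV; split_ifs <;> omega
lemma uSAV_cond {i v : ℕ} (h : i < v) : i ≤ uSAV i v := by unfold uSAV; split_ifs <;> omega
lemma sAV_uSAV {i v : ℕ} (h : v ≠ i) : sAV i (uSAV i v) = v := by
  unfold sAV uSAV; split_ifs <;> omega
lemma uSAV_lt {i v n : ℕ} (hv : v < n + 1) (hne : v ≠ i) (hi : i < n + 1) : uSAV i v < n := by
  unfold uSAV; split_ifs <;> omega

lemma card_ne (γ : Type) [Fintype γ] [DecidableEq γ] (u : γ) :
    Fintype.card γ = Fintype.card {a : γ // a ≠ u} + 1 := by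
  have h1 : Fintype.card {a : γ // a = u} = 1 := Fintype.card_subtype_eq u
  have h2 : Fintype.card {a : γ // ¬ a = u} =
      Fintype.card γ - Fintype.card {a : γ // a = u} :=
    Fintype.card_subtype_compl _
  have h3 : 0 < Fintype.card γ := Fintype.card_pos_iff.mpr ⟨u⟩
  have h4 : Fintype.card {a : γ // a ≠ u} = Fintype.card {a : γ // ¬ a = u} := rfl
  omega

section Ins

variable {γ : Type} [Fintype γ] [DecidableEq γ] (O : PartialOrder γ) (u : γ) (n : ℕ)

/-- Pairs of a linear extension of `γ − u` and an admissible insertion position for `u`. -/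
def InsSet : Type :=
  {p : ExtSet {a : γ // a ≠ u} (delOrder O u) × Fin (n + 1) //
    ∀ z : {a : γ // a ≠ u}, O.le u z.1 → (p.2 : ℕ) ≤ (p.1.1 z : ℕ)}

instance : Finite (InsSet O u n) := by unfold InsSet; infer_instance

variable {O u n}

lemma ins_bound1 (hn : Fintype.card {a : γ // a ≠ u} = n) (i : Fin (n + 1)) :
    (i : ℕ) < Fintype.card γ := by
  have h1 := card_ne γ u; have h2 := i.isLt; omega

lemma ins_bound2 (hn : Fintype.card {a : γ // a ≠ u} = n) (i : Fin (n + 1))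
    (m : Fin (Fintype.card {a : γ // a ≠ u})) : sAV (i : ℕ) (m : ℕ) < Fintype.card γ := by
  have h1 := card_ne γ u; have h2 := m.isLt; have h3 := sAV_le (i : ℕ) (m : ℕ); omega

noncomputable def insFun (hn : Fintype.card {a : γ // a ≠ u} = n) (q : InsSet O u n) :
    γ → Fin (Fintype.card γ) := fun w =>
  if h : w = u then ⟨(q.1.2 : ℕ), ins_bound1 hn q.1.2⟩
  else ⟨sAV (q.1.2 : ℕ) (q.1.1.1 ⟨w, h⟩ : ℕ), ins_bound2 hn q.1.2 _⟩

lemma insFun_u (hn : Fintype.card {a : γ // a ≠ u} = n) (q : InsSet O u n) :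
    (insFun hn q u : ℕ) = (q.1.2 : ℕ) := by unfold insFun; rw [dif_pos rfl]

lemma insFun_z (hn : Fintype.card {a : γ // a ≠ u} = n) (q : InsSet O u n)
    (z : {a : γ // a ≠ u}) : (insFun hn q z.1 : ℕ) = sAV (q.1.2 : ℕ) (q.1.1.1 z : ℕ) := by
  unfold insFun; rw [dif_neg z.2]

lemma insFun_bij (hn : Fintype.card {a : γ // a ≠ u} = n) (q : InsSet O u n) :
    Function.Bijective (insFun hn q) := by
  rw [Fintype.bijective_iff_injective_and_card]
  refine ⟨fun w w' hww => ?_, by simp⟩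
  have hv := congrArg Fin.val hww
  unfold insFun at hv
  by_cases h : w = u <;> by_cases h' : w' = u
  · rw [h, h']
  · rw [dif_pos h, dif_neg h'] at hv
    exact absurd hv.symm (sAV_ne _ _)
  · rw [dif_neg h, dif_pos h'] at hv
    exact absurd hv (sAV_ne _ _)
  · rw [dif_neg h, dif_neg h'] at hv
    have h2 := sAV_inj hv
    have h3 := q.1.1.1.injective (Fin.val_injective h2)
    exact congrArg Subtype.val h3

lemma insFun_mono (hu : isMinimal O u) (hn : Fintype.card {a : γ // a ≠ u} = n)
    (q : InsSet O u n) : ∀ w w', O.le w w' → insFun hn q w ≤ insFun hn q w' := by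
  intro w w' hle
  rw [Fin.le_def]
  by_cases h : w = u <;> by_cases h' : w' = u
  · rw [h, h']
  · rw [h] at hle ⊢
    rw [insFun_u, insFun_z hn q ⟨w', h'⟩]
    have hc := q.2 ⟨w', h'⟩ hle
    have := sAV_gt_iff.mpr hc
    omega
  · exact absurd (hu w (h' ▸ hle)) h
  · rw [insFun_z hn q ⟨w, h⟩, insFun_z hn q ⟨w', h'⟩]
    exact sAV_mono (q.1.1.2 ⟨w, h⟩ ⟨w', h'⟩ hle)

noncomputable def insPsi (hu : isMinimal O u) (hn : Fintype.card {a : γ // a ≠ u} = n) :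
    InsSet O u n → ExtSet γ O := fun q =>
  ⟨Equiv.ofBijective (insFun hn q) (insFun_bij hn q), fun w w' hle => by
    simpa using insFun_mono hu hn q w w' hle⟩

lemma insPsi_u (hu : isMinimal O u) (hn : Fintype.card {a : γ // a ≠ u} = n)
    (q : InsSet O u n) : ((insPsi hu hn q).1 u : ℕ) = (q.1.2 : ℕ) := insFun_u hn q

lemma insPsi_z (hu : isMinimal O u) (hn : Fintype.card {a : γ // a ≠ u} = n)
    (q : InsSet O u n) (z : {a : γ // a ≠ u}) :
    ((insPsi hu hn q).1 z.1 : ℕ) = sAV (q.1.2 : ℕ) (q.1.1.1 z : ℕ) := insFun_z hn q z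

lemma ins_hvz (f : ExtSet γ O) (z : {a : γ // a ≠ u}) : (f.1 z.1 : ℕ) ≠ (f.1 u : ℕ) :=
  fun he => z.2 (f.1.injective (Fin.val_injective he))

noncomputable def insG (f : ExtSet γ O) :
    {a : γ // a ≠ u} → Fin (Fintype.card {a : γ // a ≠ u}) := fun z =>
  ⟨uSAV (f.1 u : ℕ) (f.1 z.1 : ℕ), by
    refine uSAV_lt ?_ (ins_hvz f z) ?_ <;>
    · have := (f.1 z.1).isLt; have := (f.1 u).isLt; have := card_ne γ u; omega⟩

lemma insG_bij (f : ExtSet γ O) : Function.Bijective (insG (u := u) f) := by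
  rw [Fintype.bijective_iff_injective_and_card]
  refine ⟨fun z z' hzz => ?_, by simp⟩
  have h2 := uSAV_inj (congrArg Fin.val hzz) (ins_hvz f z) (ins_hvz f z')
  exact Subtype.ext (f.1.injective (Fin.val_injective h2))

lemma insPsi_bij (hu : isMinimal O u) (hn : Fintype.card {a : γ // a ≠ u} = n) :
    Function.Bijective (insPsi hu hn) := by
  constructor
  · intro q q' hqq
    have he : ∀ w : γ, ((insPsi hu hn q).1 w : ℕ) = ((insPsi hu hn q').1 w : ℕ) := by
      intro w
      rw [hqq]
    have hu' : (q.1.2 : ℕ) = (q'.1.2 : ℕ) := by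
      have := he u; rwa [insPsi_u, insPsi_u] at this
    have hg : ∀ z : {a : γ // a ≠ u}, q.1.1.1 z = q'.1.1.1 z := by
      intro z
      have := he z.1
      rw [insPsi_z hu hn q z, insPsi_z hu hn q' z, hu'] at this
      exact Fin.val_injective (sAV_inj this)
    exact Subtype.ext (Prod.ext (Subtype.ext (Equiv.ext hg)) (Fin.val_injective hu'))
  · intro f
    have hbd : (f.1 u : ℕ) < n + 1 := by
      have := (f.1 u).isLt; have := card_ne γ u; omega
    refine ⟨⟨⟨⟨Equiv.ofBijective (insG f) (insG_bij f), ?_⟩, ⟨(f.1 u : ℕ), hbd⟩⟩, ?_⟩, ?_⟩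
    · intro z z' hle
      rw [Fin.le_def]
      simp only [Equiv.ofBijective_apply]
      exact uSAV_mono (ins_hvz f z) (ins_hvz f z') (f.2 z.1 z'.1 hle)
    · intro z hz
      simp only [Equiv.ofBijective_apply]
      have h1 : (f.1 u : ℕ) ≤ (f.1 z.1 : ℕ) := f.2 u z.1 hz
      exact uSAV_cond (lt_of_le_of_ne h1 (fun e => ins_hvz f z e.symm))
    · apply Subtype.ext
      apply Equiv.ext
      intro w
      apply Fin.val_injective
      show (insFun hn _ w : ℕ) = (f.1 w : ℕ)
      unfold insFun
      by_cases h : w = u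
      · rw [dif_pos h, h]
      · rw [dif_neg h]
        show sAV (f.1 u : ℕ) ((insG f ⟨w, h⟩ : ℕ)) = _
        exact sAV_uSAV (ins_hvz f ⟨w, h⟩)

lemma tool_ins (hu : isMinimal O u) (hn : Fintype.card {a : γ // a ≠ u} = n) :
    eCount γ O = Nat.card (InsSet O u n) :=
  (Nat.card_eq_of_bijective _ (insPsi_bij hu hn)).symm

end Ins

section Chain

variable {k : ℕ} {δ : Type} [Fintype δ] [DecidableEq δ] {Oδ : PartialOrder δ}

lemma chain_card : Fintype.card (Fin k ⊕ δ) = k + Fintype.card δ := by simp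

lemma chb1 (j : Fin k) : (j : ℕ) < Fintype.card (Fin k ⊕ δ) := by
  have := j.isLt; have := chain_card (k := k) (δ := δ); omega

lemma chb2 (m : Fin (Fintype.card δ)) : k + (m : ℕ) < Fintype.card (Fin k ⊕ δ) := by
  have := m.isLt; have := chain_card (k := k) (δ := δ); omega

noncomputable def chainFun (h : ExtSet δ Oδ) : Fin k ⊕ δ → Fin (Fintype.card (Fin k ⊕ δ))
  | .inl j => ⟨(j : ℕ), chb1 j⟩
  | .inr w => ⟨k + (h.1 w : ℕ), chb2 (h.1 w)⟩

lemma chainFun_bij (h : ExtSet δ Oδ) : Function.Bijective (chainFun (k := k) h) := by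
  rw [Fintype.bijective_iff_injective_and_card]
  refine ⟨fun w w' hww => ?_, by simp⟩
  have hv := congrArg Fin.val hww
  rcases w with j | s <;> rcases w' with j' | s' <;> simp only [chainFun] at hv
  · exact congrArg Sum.inl (Fin.val_injective hv)
  · exact absurd hv (by have := j.isLt; have := (h.1 s').isLt; omega)
  · exact absurd hv (by have := j'.isLt; have := (h.1 s).isLt; omega)
  · have : (h.1 s : ℕ) = (h.1 s' : ℕ) := by omega
    exact congrArg Sum.inr (h.1.injective (Fin.val_injective this))

lemma chainFun_mono (h : ExtSet δ Oδ) : ∀ w w',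
    (linOrder (inferInstance : PartialOrder (Fin k)) Oδ).le w w' →
      chainFun h w ≤ chainFun h w' := by
  intro w w' hle
  rw [Fin.le_def]
  rcases w with j | s <;> rcases w' with j' | s' <;> simp only [chainFun]
  · exact hle
  · have := j.isLt; omega
  · exact hle.elim
  · have : (h.1 s : ℕ) ≤ (h.1 s' : ℕ) := h.2 s s' hle
    omega

noncomputable def chainLam :
    ExtSet δ Oδ → ExtSet (Fin k ⊕ δ) (linOrder (inferInstance : PartialOrder (Fin k)) Oδ) :=
  fun h => ⟨Equiv.ofBijective (chainFun h) (chainFun_bij h), fun w w' hle => by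
    simpa using chainFun_mono h w w' hle⟩

lemma chainLam_inl (h : ExtSet δ Oδ) (j : Fin k) : ((chainLam h).1 (.inl j) : ℕ) = (j : ℕ) := rfl

lemma chainLam_inr (h : ExtSet δ Oδ) (w : δ) :
    ((chainLam (k := k) h).1 (.inr w) : ℕ) = k + (h.1 w : ℕ) := rfl

lemma chain_forced (g : ExtSet (Fin k ⊕ δ) (linOrder (inferInstance : PartialOrder (Fin k)) Oδ)) :
    ∀ j : Fin k, ((g.1 (.inl j)) : ℕ) = (j : ℕ) := by
  suffices main : ∀ m : ℕ, ∀ j : Fin k, (j : ℕ) = m → ((g.1 (.inl j)) : ℕ) = m by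
    intro j; exact main _ j rfl
  intro m
  induction m using Nat.strong_induction_on with
  | _ m IH =>
    intro j hj
    by_contra hne
    rcases Nat.lt_or_ge ((g.1 (.inl j)) : ℕ) m with hlt | hge
    · have hjv : ((g.1 (.inl j)) : ℕ) < k := by have := j.isLt; omega
      have h1 := IH _ hlt ⟨_, hjv⟩ rfl
      have h2 : g.1 (.inl j) = g.1 (.inl ⟨_, hjv⟩) := Fin.val_injective (by rw [h1])
      have h3 := Sum.inl.inj (g.1.injective h2)
      have h4 := congrArg Fin.val h3
      simp only at h4
      omega
    · have hgt : m < ((g.1 (.inl j)) : ℕ) := by omega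
      have hm : m < Fintype.card (Fin k ⊕ δ) := by
        have := j.isLt; have := chain_card (k := k) (δ := δ); omega
      have hw := g.1.apply_symm_apply ⟨m, hm⟩
      rcases hws : g.1.symm ⟨m, hm⟩ with j' | s
      · rw [hws] at hw
        rcases Nat.lt_trichotomy ((j' : ℕ)) m with h1 | h1 | h1
        · have h2 := IH _ h1 j' rfl
          rw [hw] at h2
          simp only at h2
          omega
        · have h2 : j' = j := Fin.val_injective (by omega)
          rw [h2] at hw
          have := congrArg Fin.val hw
          simp only at this
          omega
        · have hmono := g.2 (.inl j) (.inl j')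
            (show (j : ℕ) ≤ (j' : ℕ) by omega)
          rw [hw] at hmono
          have : ((g.1 (.inl j)) : ℕ) ≤ m := hmono
          omega
      · rw [hws] at hw
        have hmono := g.2 (.inl j) (.inr s) trivial
        rw [hw] at hmono
        have : ((g.1 (.inl j)) : ℕ) ≤ m := hmono
        omega

lemma chain_ge (g : ExtSet (Fin k ⊕ δ) (linOrder (inferInstance : PartialOrder (Fin k)) Oδ))
    (w : δ) : k ≤ ((g.1 (.inr w)) : ℕ) := by
  by_contra hlt
  push_neg at hlt
  have h1 := chain_forced g ⟨_, hlt⟩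
  have h2 : g.1 (.inl ⟨_, hlt⟩) = g.1 (.inr w) := Fin.val_injective (by rw [h1])
  exact Sum.inl_ne_inr (g.1.injective h2)

lemma chainLam_bij : Function.Bijective (chainLam (k := k) (Oδ := Oδ)) := by
  constructor
  · intro h h' hhh
    have he : ∀ w, ((chainLam (k := k) h).1 (.inr w) : ℕ) = ((chainLam (k := k) h').1 (.inr w) : ℕ) := by
      intro w; rw [hhh]
    refine Subtype.ext (Equiv.ext fun w => ?_)
    have := he w
    rw [chainLam_inr, chainLam_inr] at this
    exact Fin.val_injective (by omega)
  · intro g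
    have hbd : ∀ w : δ, ((g.1 (.inr w)) : ℕ) - k < Fintype.card δ := by
      intro w
      have := (g.1 (.inr w)).isLt
      have := chain_card (k := k) (δ := δ)
      have := chain_ge g w
      omega
    have hinj : Function.Injective (fun w : δ => (⟨((g.1 (.inr w)) : ℕ) - k, hbd w⟩ :
        Fin (Fintype.card δ))) := by
      intro w w' hww
      have hv := congrArg Fin.val hww
      simp only at hv
      have h2 : ((g.1 (.inr w)) : ℕ) = ((g.1 (.inr w')) : ℕ) := by
        have := chain_ge g w; have := chain_ge g w'; omega
      exact Sum.inr.inj (g.1.injective (Fin.val_injective h2))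
    have hbij := (Fintype.bijective_iff_injective_and_card _).mpr ⟨hinj, by simp⟩
    refine ⟨⟨Equiv.ofBijective _ hbij, ?_⟩, ?_⟩
    · intro w w' hle
      rw [Fin.le_def]
      simp only [Equiv.ofBijective_apply]
      have h1 : ((g.1 (.inr w)) : ℕ) ≤ ((g.1 (.inr w')) : ℕ) := g.2 (.inr w) (.inr w') hle
      have := chain_ge g w; omega
    · apply Subtype.ext
      apply Equiv.ext
      rintro (j | w) <;> apply Fin.val_injective
      · exact (chainLam_inl _ j).trans (chain_forced g j).symm
      · refine (chainLam_inr _ w).trans ?_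
        show k + (((g.1 (.inr w)) : ℕ) - k) = _
        have := chain_ge g w
        omega

end Chain

section Trans

variable {δ₁ δ₂ : Type} [Fintype δ₁] [Fintype δ₂] (O₁ : PartialOrder δ₁) (O₂ : PartialOrder δ₂)

noncomputable def transT (K : δ₁ ≃ δ₂) (hK : ∀ u v, O₁.le u v ↔ O₂.le (K u) (K v)) :
    ExtSet δ₁ O₁ → ExtSet δ₂ O₂ := fun f =>
  ⟨(K.symm.trans f.1).trans (finCongr (Fintype.card_congr K)), fun a b hab => by
    have h1 : O₁.le (K.symm a) (K.symm b) := by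
      rw [hK (K.symm a) (K.symm b), K.apply_symm_apply, K.apply_symm_apply]
      exact hab
    have h2 := f.2 _ _ h1
    rw [Fin.le_def] at h2 ⊢
    simpa using h2⟩

lemma transT_val (K : δ₁ ≃ δ₂) (hK : ∀ u v, O₁.le u v ↔ O₂.le (K u) (K v)) (f : ExtSet δ₁ O₁)
    (w : δ₂) : ((transT O₁ O₂ K hK f).1 w : ℕ) = (f.1 (K.symm w) : ℕ) := rfl

lemma transT_bij (K : δ₁ ≃ δ₂) (hK : ∀ u v, O₁.le u v ↔ O₂.le (K u) (K v)) :
    Function.Bijective (transT O₁ O₂ K hK) := by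
  constructor
  · intro f f' hff
    refine Subtype.ext (Equiv.ext fun z => ?_)
    apply Fin.val_injective
    have h3 : ((transT O₁ O₂ K hK f).1 (K z) : ℕ) = ((transT O₁ O₂ K hK f').1 (K z) : ℕ) := by
      rw [hff]
    rwa [transT_val, transT_val, K.symm_apply_apply] at h3
  · intro f₂
    have hK' : ∀ u v, O₂.le u v ↔ O₁.le (K.symm u) (K.symm v) := by
      intro u v
      rw [hK (K.symm u) (K.symm v), K.apply_symm_apply, K.apply_symm_apply]
    refine ⟨transT O₂ O₁ K.symm hK' f₂, ?_⟩
    refine Subtype.ext (Equiv.ext fun z => ?_)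
    apply Fin.val_injective
    rw [transT_val, transT_val, K.symm_symm, K.apply_symm_apply]

end Trans

section Split

lemma split_card (A : Type) [Finite A] (k m : ℕ) (C : A → ℕ → Prop)
    (hC : ∀ g i, i < k → C g i) :
    Nat.card {p : A × Fin (k + m) // C p.1 (p.2 : ℕ)} =
      k * Nat.card A + Nat.card {p : A × Fin m // C p.1 (k + (p.2 : ℕ))} := by
  have e : {p : A × Fin (k + m) // C p.1 (p.2 : ℕ)} ≃
      (A × Fin k) ⊕ {p : A × Fin m // C p.1 (k + (p.2 : ℕ))} := by
    refine
      { toFun := fun q => if h : (q.1.2 : ℕ) < k then .inl (q.1.1, ⟨(q.1.2 : ℕ), h⟩)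
          else .inr ⟨(q.1.1, ⟨(q.1.2 : ℕ) - k, by have := q.1.2.isLt; omega⟩), by
            have h2 := q.2
            have h3 : k + ((q.1.2 : ℕ) - k) = (q.1.2 : ℕ) := by omega
            show C q.1.1 _
            rw [h3]
            exact h2⟩
        invFun := fun s => match s with
          | .inl (g, i) => ⟨(g, ⟨(i : ℕ), by have := i.isLt; omega⟩), hC g (i : ℕ) i.isLt⟩
          | .inr q => ⟨(q.1.1, ⟨k + (q.1.2 : ℕ), by have := q.1.2.isLt; omega⟩), q.2⟩
        left_inv := ?_
        right_inv := ?_ }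
    · rintro ⟨⟨g, i⟩, hc⟩
      dsimp only
      by_cases h : (i : ℕ) < k
      · rw [dif_pos h]
      · rw [dif_neg h]
        refine Subtype.ext (Prod.ext rfl (Fin.val_injective ?_))
        show k + ((i : ℕ) - k) = (i : ℕ)
        have := i.isLt
        omega
    · rintro (⟨g, i⟩ | ⟨⟨g, i⟩, hc⟩)
      · dsimp only
        rw [dif_pos (show ((i : ℕ) : ℕ) < k from i.isLt)]
      · dsimp only
        rw [dif_neg (show ¬ k + (i : ℕ) < k by omega)]
        refine congrArg Sum.inr (Subtype.ext (Prod.ext rfl (Fin.val_injective ?_)))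
        show k + (i : ℕ) - k = (i : ℕ)
        omega
  rw [Nat.card_congr e, Nat.card_sum, Nat.card_prod, Nat.card_eq_fintype_card (α := Fin k),
    Fintype.card_fin, mul_comm]

end Split

section MainConstruction

variable (α : Type) [Fintype α] [DecidableEq α]

/-- the big carrier -/
abbrev BigT (a' b' : ℕ) : Type := (α ⊕ (Unit ⊕ Fin a')) ⊕ Fin b'

abbrev yyD (a' b' : ℕ) : BigT α a' b' := Sum.inl (Sum.inr (Sum.inl ()))

abbrev RordD (O : PartialOrder α) (x : α) (a' b' : ℕ) : PartialOrder (BigT α a' b') :=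
  hybOrder
    (hybOrder O
      (parOrder (inferInstance : PartialOrder Unit)
        (inferInstance : PartialOrder (Fin a'))) x)
    (inferInstance : PartialOrder (Fin b')) (Sum.inr (Sum.inl ()))

abbrev HdO (O : PartialOrder α) (x : α) (a' : ℕ) : PartialOrder (α ⊕ Fin a') :=
  hybOrder O (inferInstance : PartialOrder (Fin a')) x

abbrev PxS (O : PartialOrder α) (x : α) : Type := ExtSet {z : α // z ≠ x} (delOrder O x)

abbrev O1a (O : PartialOrder α) (x : α) (a' : ℕ) : PartialOrder (Fin a' ⊕ {z : α // z ≠ x}) :=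
  linOrder (inferInstance : PartialOrder (Fin a')) (delOrder O x)

abbrev O2a (O : PartialOrder α) (x : α) (a' : ℕ) :
    PartialOrder {w : α ⊕ Fin a' // w ≠ Sum.inl x} := delOrder (HdO α O x a') (Sum.inl x)

abbrev O1b (O : PartialOrder α) (x : α) (a' b' : ℕ) :
    PartialOrder (Fin b' ⊕ (α ⊕ Fin a')) :=
  linOrder (inferInstance : PartialOrder (Fin b')) (HdO α O x a')

abbrev O2b (O : PartialOrder α) (x : α) (a' b' : ℕ) :
    PartialOrder {w : BigT α a' b' // w ≠ yyD α a' b'} :=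
  delOrder (RordD α O x a' b') (yyD α a' b')

def DomC (O : PartialOrder α) (x : α) (a' : ℕ) (g : PxS α O x) (i : ℕ) : Prop :=
  ∀ z : {z : α // z ≠ x}, O.le x z.1 → i ≤ a' + (g.1 z : ℕ)

def DomS (O : PartialOrder α) (x : α) (a' n₁ : ℕ) : Type :=
  {p : PxS α O x × Fin (a' + (n₁ + 1)) // DomC α O x a' p.1 (p.2 : ℕ)}

instance (O : PartialOrder α) (x : α) (a' n₁ : ℕ) : Finite (DomS α O x a' n₁) := by
  unfold DomS; infer_instance

variable {α}

lemma hx_min' (O : PartialOrder α) {x : α} (hx : isMinimal O x) (a' : ℕ) :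
    isMinimal (HdO α O x a') (Sum.inl x) := by
  rintro (z | j) h
  · exact congrArg Sum.inl (hx z h)
  · exact absurd (O.le_refl x) h

lemma hy_min (O : PartialOrder α) (x : α) (a' b' : ℕ) :
    isMinimal (RordD α O x a' b') (yyD α a' b') := by
  rintro ((z | (u | j)) | c) h
  · exact h.elim
  · rcases u; rfl
  · exact h.elim
  · exact absurd ((inferInstance : PartialOrder Unit).le_refl ()) h

def K2 (x : α) (a' : ℕ) : (Fin a' ⊕ {z : α // z ≠ x}) ≃ {w : α ⊕ Fin a' // w ≠ Sum.inl x} where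
  toFun := fun w => match w with
    | .inl j => ⟨.inr j, by simp⟩
    | .inr z => ⟨.inl z.1, by simpa using z.2⟩
  invFun := fun w => match w with
    | ⟨.inl z, h⟩ => .inr ⟨z, fun e => h (congrArg Sum.inl e)⟩
    | ⟨.inr j, _⟩ => .inl j
  left_inv := by rintro (j | z) <;> rfl
  right_inv := by rintro ⟨(z | j), h⟩ <;> rfl

lemma hK2 {O : PartialOrder α} {x : α} (hx : isMinimal O x) (a' : ℕ) :
    ∀ u v, (linOrder (inferInstance : PartialOrder (Fin a')) (delOrder O x)).le u v ↔
      (delOrder (HdO α O x a') (Sum.inl x)).le (K2 x a' u) (K2 x a' v) := by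
  rintro (j | z) (j' | z')
  · exact Iff.rfl
  · exact iff_of_true trivial (fun h => z'.2 (hx _ h))
  · exact Iff.rfl
  · exact Iff.rfl

def K1 (a' b' : ℕ) : (Fin b' ⊕ (α ⊕ Fin a')) ≃ {w : BigT α a' b' // w ≠ yyD α a' b'} where
  toFun := fun w => match w with
    | .inl c => ⟨.inr c, by simp⟩
    | .inr (.inl z) => ⟨.inl (.inl z), by simp⟩
    | .inr (.inr j) => ⟨.inl (.inr (.inr j)), by simp⟩
  invFun := fun w => match w with
    | ⟨.inr c, _⟩ => .inl c
    | ⟨.inl (.inl z), _⟩ => .inr (.inl z)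
    | ⟨.inl (.inr (.inr j)), _⟩ => .inr (.inr j)
    | ⟨.inl (.inr (.inl ())), h⟩ => absurd rfl h
  left_inv := by rintro (c | (z | j)) <;> rfl
  right_inv := by
    rintro ⟨((z | (u | j)) | c), h⟩
    · rfl
    · rcases u; exact absurd rfl h
    · rfl
    · rfl

lemma hK1 (O : PartialOrder α) (x : α) (a' b' : ℕ) :
    ∀ u v, (linOrder (inferInstance : PartialOrder (Fin b')) (HdO α O x a')).le u v ↔
      (delOrder (RordD α O x a' b') (yyD α a' b')).le (K1 a' b' u) (K1 a' b' v) := by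
  rintro (c | (z | j)) (c' | (z' | j')) <;>
    first
      | exact Iff.rfl
      | exact iff_of_true trivial id

noncomputable def step1 {O : PartialOrder α} {x : α} (hx : isMinimal O x) (a' n₁ : ℕ)
    (q : DomS α O x a' n₁) : InsSet (HdO α O x a') (Sum.inl x) (a' + n₁) :=
  ⟨(transT (O1a α O x a') (O2a α O x a') (K2 x a') (hK2 hx a') (chainLam q.1.1), q.1.2), by
    rintro ⟨(z | j), hw⟩ hle
    · have hz : z ≠ x := fun e => hw (congrArg Sum.inl e)
      have hv : ((transT (O1a α O x a') (O2a α O x a') (K2 x a') (hK2 hx a') (chainLam q.1.1)).1 ⟨Sum.inl z, hw⟩ : ℕ)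
          = a' + (q.1.1.1 ⟨z, hz⟩ : ℕ) := by
        rw [transT_val]
        exact chainLam_inr q.1.1 ⟨z, hz⟩
      rw [hv]
      exact q.2 ⟨z, hz⟩ hle
    · exact hle.elim⟩

lemma step1_bij {O : PartialOrder α} {x : α} (hx : isMinimal O x) (a' n₁ : ℕ) :
    Function.Bijective (step1 hx a' n₁) := by
  constructor
  · intro q q' hqq
    have h1 : transT (O1a α O x a') (O2a α O x a') (K2 x a') (hK2 hx a') (chainLam q.1.1)
        = transT (O1a α O x a') (O2a α O x a') (K2 x a') (hK2 hx a') (chainLam q'.1.1) := congrArg (fun t => t.1.1) hqq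
    have h2 : q.1.1 = q'.1.1 := chainLam_bij.1 ((transT_bij (O1a α O x a') (O2a α O x a') _ _).1 h1)
    have h3 : q.1.2 = q'.1.2 := congrArg (fun t => t.1.2) hqq
    exact Subtype.ext (Prod.ext h2 h3)
  · intro p
    obtain ⟨t, ht⟩ := (transT_bij (O1a α O x a') (O2a α O x a') (K2 x a') (hK2 hx a')).2 p.1.1
    obtain ⟨h, hh⟩ := chainLam_bij.2 t
    have hcond : DomC α O x a' h ((p.1.2 : ℕ)) := by
      intro z hz
      have hle : (HdO α O x a').le (Sum.inl x) (Sum.inl z.1) := hz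
      have h2 := p.2 ⟨Sum.inl z.1, fun e => z.2 (Sum.inl.inj e)⟩ hle
      have hv : (p.1.1.1 ⟨Sum.inl z.1, fun e => z.2 (Sum.inl.inj e)⟩ : ℕ)
          = a' + (h.1 z : ℕ) := by
        rw [← ht, ← hh, transT_val]
        exact chainLam_inr h ⟨z.1, z.2⟩
      rwa [hv] at h2
    refine ⟨⟨(h, p.1.2), hcond⟩, ?_⟩
    apply Subtype.ext
    apply Prod.ext
    · show transT (O1a α O x a') (O2a α O x a') (K2 x a') (hK2 hx a') (chainLam h) = p.1.1
      rw [hh, ht]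
    · rfl

noncomputable def thetaF {O : PartialOrder α} {x : α} (hx : isMinimal O x) (a' b' n₁ : ℕ)
    (hn₂ : Fintype.card {w : α ⊕ Fin a' // w ≠ Sum.inl x} = a' + n₁)
    (q : DomS α O x a' n₁) :
    ExtSet {w : BigT α a' b' // w ≠ yyD α a' b'} (delOrder (RordD α O x a' b') (yyD α a' b')) :=
  transT (O1b α O x a' b') (O2b α O x a' b') (K1 a' b') (hK1 O x a' b')
    (chainLam (insPsi (hx_min' O hx a') hn₂ (step1 hx a' n₁ q)))

lemma thetaF_bij {O : PartialOrder α} {x : α} (hx : isMinimal O x) (a' b' n₁ : ℕ)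
    (hn₂ : Fintype.card {w : α ⊕ Fin a' // w ≠ Sum.inl x} = a' + n₁) :
    Function.Bijective (thetaF hx a' b' n₁ hn₂ :
      DomS α O x a' n₁ → ExtSet {w : BigT α a' b' // w ≠ yyD α a' b'} _) :=
  ((transT_bij (O1b α O x a' b') (O2b α O x a' b') _ _).comp chainLam_bij).comp
    ((insPsi_bij (hx_min' O hx a') hn₂).comp (step1_bij hx a' n₁))

lemma thetaF_val {O : PartialOrder α} {x : α} (hx : isMinimal O x) (a' b' n₁ : ℕ)
    (hn₂ : Fintype.card {w : α ⊕ Fin a' // w ≠ Sum.inl x} = a' + n₁)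
    (q : DomS α O x a' n₁) (z : α) (hz : z ≠ x)
    (hne : (Sum.inl (Sum.inl z) : BigT α a' b') ≠ yyD α a' b') :
    ((thetaF hx a' b' n₁ hn₂ q).1 ⟨Sum.inl (Sum.inl z), hne⟩ : ℕ)
      = b' + sAV (q.1.2 : ℕ) (a' + (q.1.1.1 ⟨z, hz⟩ : ℕ)) := by
  unfold thetaF
  rw [transT_val]
  have h1 : ((chainLam (insPsi (hx_min' O hx a') hn₂ (step1 hx a' n₁ q))).1
      ((K1 a' b' (α := α)).symm ⟨Sum.inl (Sum.inl z), hne⟩) : ℕ)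
      = b' + ((insPsi (hx_min' O hx a') hn₂ (step1 hx a' n₁ q)).1 (Sum.inl z) : ℕ) :=
    chainLam_inr _ (Sum.inl z)
  rw [h1]
  have h2 : ((insPsi (hx_min' O hx a') hn₂ (step1 hx a' n₁ q)).1 (Sum.inl z) : ℕ)
      = sAV ((step1 hx a' n₁ q).1.2 : ℕ)
          ((step1 hx a' n₁ q).1.1.1 ⟨Sum.inl z, fun e => hz (Sum.inl.inj e)⟩ : ℕ) :=
    insPsi_z _ hn₂ _ ⟨Sum.inl z, fun e => hz (Sum.inl.inj e)⟩
  rw [h2]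
  have h3 : ((step1 hx a' n₁ q).1.1.1 ⟨Sum.inl z, fun e => hz (Sum.inl.inj e)⟩ : ℕ)
      = a' + (q.1.1.1 ⟨z, hz⟩ : ℕ) := by
    show ((transT (O1a α O x a') (O2a α O x a') (K2 x a') (hK2 hx a') (chainLam q.1.1)).1 _ : ℕ) = _
    rw [transT_val]
    exact chainLam_inr q.1.1 ⟨z, hz⟩
  rw [h3]
  rfl

end MainConstruction

section MainLemmas

variable {α : Type} [Fintype α] [DecidableEq α]

lemma sAV_big {i m : ℕ} (h : m + 1 ≤ sAV i m) : i ≤ m := by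
  unfold sAV at h; split_ifs at h <;> omega

lemma hn2_eq (x : α) (a' : ℕ) :
    Fintype.card {w : α ⊕ Fin a' // w ≠ Sum.inl x} = a' + Fintype.card {z : α // z ≠ x} := by
  have h1 := card_ne (α ⊕ Fin a') (Sum.inl x)
  have h2 := card_ne α x
  have h3 : Fintype.card (α ⊕ Fin a') = Fintype.card α + a' := by simp
  omega

lemma cardPx_eq (O : PartialOrder α) (x : α) : Nat.card (PxS α O x) = eDel α O x := rfl

lemma cardDomS (O : PartialOrder α) (x : α) (hx : isMinimal O x) (a' b' : ℕ) :
    Nat.card (DomS α O x a' (Fintype.card {z : α // z ≠ x})) =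
      eDel (BigT α a' b') (RordD α O x a' b') (yyD α a' b') :=
  Nat.card_eq_of_bijective _ (thetaF_bij hx a' b' _ (hn2_eq x a'))

lemma main1 (O : PartialOrder α) (x : α) (hx : isMinimal O x) (a' b' : ℕ) :
    eDel (BigT α a' b') (RordD α O x a' b') (yyD α a' b')
      = eCount α O + a' * eDel α O x := by
  set n₁ := Fintype.card {z : α // z ≠ x} with hn₁
  rw [← cardDomS O x hx a' b']
  have h2 : Nat.card (DomS α O x a' n₁) = a' * Nat.card (PxS α O x) +
      Nat.card {p : PxS α O x × Fin (n₁ + 1) // DomC α O x a' p.1 (a' + (p.2 : ℕ))} := by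
    have := split_card (PxS α O x) a' (n₁ + 1) (DomC α O x a')
      (fun g i hi => fun z _ => by omega)
    exact this
  have h3 : {p : PxS α O x × Fin (n₁ + 1) // DomC α O x a' p.1 (a' + (p.2 : ℕ))} ≃
      InsSet O x n₁ := by
    refine Equiv.subtypeEquivRight fun p => ?_
    constructor
    · intro h z hz
      have := h z hz
      omega
    · intro h z hz
      have := h z hz
      omega
  have h4 : eCount α O = Nat.card (InsSet O x n₁) := tool_ins hx hn₁.symm
  rw [h2, Nat.card_congr h3, ← h4, cardPx_eq]
  omega

lemma main2 (O : PartialOrder α) (x : α) (hx : isMinimal O x) (a' b' : ℕ) :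
    eCount (BigT α a' b') (RordD α O x a' b') =
      (a' + 1 + b') * eDel (BigT α a' b') (RordD α O x a' b') (yyD α a' b')
        + (a' + 1) * eDel α O x := by
  set n₁ := Fintype.card {z : α // z ≠ x} with hn₁
  have hn₂ : Fintype.card {w : α ⊕ Fin a' // w ≠ Sum.inl x} = a' + n₁ := hn2_eq x a'
  have hN : Fintype.card {w : BigT α a' b' // w ≠ yyD α a' b'} = a' + 1 + b' + n₁ := by
    have h1 := card_ne (BigT α a' b') (yyD α a' b')
    have h2 := card_ne α x
    have h3 : Fintype.card (BigT α a' b') = Fintype.card α + (1 + a') + b' := by simp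
    omega
  have h0 := tool_ins (O := RordD α O x a' b') (u := yyD α a' b')
    (hy_min O x a' b') hN
  set TE : DomS α O x a' n₁ ≃
      ExtSet {w : BigT α a' b' // w ≠ yyD α a' b'} (O2b α O x a' b') :=
    Equiv.ofBijective _ (thetaF_bij hx a' b' n₁ hn₂) with hTE
  have h1 : {q : DomS α O x a' n₁ × Fin (a' + 1 + b' + n₁ + 1) //
      ∀ z : {w : BigT α a' b' // w ≠ yyD α a' b'},
        (RordD α O x a' b').le (yyD α a' b') z.1 →
          (q.2 : ℕ) ≤ ((TE q.1).1 z : ℕ)} ≃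
      InsSet (RordD α O x a' b') (yyD α a' b') (a' + 1 + b' + n₁) := by
    refine Equiv.subtypeEquiv (Equiv.prodCongr TE (Equiv.refl _)) fun q => ?_
    exact Iff.rfl
  -- characterize the condition
  set C₂ : DomS α O x a' n₁ → ℕ → Prop := fun q m =>
    ∀ z : {z : α // z ≠ x}, m ≤ b' + sAV (q.1.2 : ℕ) (a' + (q.1.1.1 z : ℕ)) with hC₂
  have hval : ∀ (q : DomS α O x a' n₁) (z : {z : α // z ≠ x}),
      ((TE q).1 ⟨Sum.inl (Sum.inl z.1), by simp⟩ : ℕ)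
        = b' + sAV (q.1.2 : ℕ) (a' + (q.1.1.1 z : ℕ)) := by
    intro q z
    exact thetaF_val hx a' b' n₁ hn₂ q z.1 z.2 (by simp)
  have hiff : ∀ (q : DomS α O x a' n₁) (i : Fin (a' + 1 + b' + n₁ + 1)),
      (∀ z : {w : BigT α a' b' // w ≠ yyD α a' b'},
        (RordD α O x a' b').le (yyD α a' b') z.1 →
          (i : ℕ) ≤ ((TE q).1 z : ℕ)) ↔ C₂ q (i : ℕ) := by
    intro q i
    constructor
    · intro h z
      have hle : (RordD α O x a' b').le (yyD α a' b') (Sum.inl (Sum.inl z.1)) :=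
        fun hle => z.2 (hx _ hle)
      have := h ⟨Sum.inl (Sum.inl z.1), by simp⟩ hle
      rwa [hval q z] at this
    · rintro h ⟨((zz | (u | j)) | c), hw⟩ hle
      · have hz : zz ≠ x := fun e => hle (e ▸ O.le_refl x)
        have := h ⟨zz, hz⟩
        rwa [← hval q ⟨zz, hz⟩] at this
      · rcases u; exact absurd rfl hw
      · exact hle.elim
      · exact hle.elim
  have h2 : Nat.card (InsSet (RordD α O x a' b') (yyD α a' b') (a' + 1 + b' + n₁)) =
      Nat.card {p : DomS α O x a' n₁ × Fin ((a' + 1 + b') + (n₁ + 1)) //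
        C₂ p.1 (p.2 : ℕ)} := by
    rw [← Nat.card_congr h1]
    exact Nat.card_congr (Equiv.subtypeEquivRight fun p => hiff p.1 p.2)
  have h3 := split_card (DomS α O x a' n₁) (a' + 1 + b') (n₁ + 1) C₂
    (fun g i hi => by
      intro z
      have h5 := sAV_ge (g.1.2 : ℕ) (a' + (g.1.1.1 z : ℕ))
      omega)
  -- the tail set
  have hkey : ∀ (q : DomS α O x a' n₁) (j : Fin (n₁ + 1)),
      C₂ q (a' + 1 + b' + (j : ℕ)) ↔ ((j : ℕ) = 0 ∧ (q.1.2 : ℕ) ≤ a') := by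
    intro q j
    constructor
    · intro h
      rcases Nat.eq_zero_or_pos n₁ with hz | hpos
      · have hj := j.isLt
        have hi := q.1.2.isLt
        omega
      · set z₀ := q.1.1.1.symm ⟨0, hpos⟩ with hz₀
        have hz0 : (q.1.1.1 z₀ : ℕ) = 0 := by
          rw [hz₀, Equiv.apply_symm_apply]
        have h6 := h z₀
        rw [hz0] at h6
        have h7 := sAV_le (q.1.2 : ℕ) (a' + 0)
        have hj0 : (j : ℕ) = 0 := by omega
        have h8 : a' + 0 + 1 ≤ sAV (q.1.2 : ℕ) (a' + 0) := by omega
        exact ⟨hj0, by have := sAV_big h8; omega⟩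
    · rintro ⟨hj, hi⟩ z
      have h9 : sAV (q.1.2 : ℕ) (a' + (q.1.1.1 z : ℕ)) = a' + (q.1.1.1 z : ℕ) + 1 :=
        sAV_eq_of_le (by omega)
      omega
  have h4 : Nat.card {p : DomS α O x a' n₁ × Fin (n₁ + 1) //
      C₂ p.1 (a' + 1 + b' + (p.2 : ℕ))} = Nat.card (PxS α O x × Fin (a' + 1)) := by
    refine Nat.card_congr ?_
    refine
      { toFun := fun q => (q.1.1.1.1, ⟨(q.1.1.1.2 : ℕ), by
          have := ((hkey q.1.1 q.1.2).mp q.2).2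
          omega⟩)
        invFun := fun p => ⟨⟨⟨(p.1, ⟨(p.2 : ℕ), by have := p.2.isLt; omega⟩), by
          intro z hz
          show (p.2 : ℕ) ≤ a' + _
          have := p.2.isLt
          omega⟩, ⟨0, by omega⟩⟩, (hkey _ _).mpr ⟨rfl, by show (p.2 : ℕ) ≤ a'; have := p.2.isLt; omega⟩⟩
        left_inv := ?_
        right_inv := ?_ }
    · rintro ⟨⟨⟨⟨g, i⟩, hd⟩, j⟩, hc⟩
      have hj := ((hkey _ _).mp hc).1
      refine Subtype.ext (Prod.ext (Subtype.ext (Prod.ext rfl ?_)) ?_)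
      · exact Fin.val_injective rfl
      · exact Fin.val_injective hj.symm
    · rintro ⟨g, i⟩
      exact Prod.ext rfl (Fin.val_injective rfl)
  have h6 : Nat.card (PxS α O x × Fin (a' + 1)) = (a' + 1) * Nat.card (PxS α O x) := by
    rw [Nat.card_prod, Nat.card_eq_fintype_card (α := Fin (a' + 1)), Fintype.card_fin, mul_comm]
  rw [h0, h2, h3, h4, h6, cardDomS O x hx a' b', cardPx_eq]

end MainLemmas

section WidthCard

variable {α : Type} [Fintype α] [DecidableEq α]

lemma pwidth_bdd (β : Type) [Fintype β] (O : PartialOrder β) :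
    BddAbove {n : ℕ | ∃ s : Finset β,
      (∀ a ∈ s, ∀ b ∈ s, a ≠ b → ¬ O.le a b) ∧ s.card = n} := by
  refine ⟨Fintype.card β, ?_⟩
  rintro N ⟨s, _, rfl⟩
  exact Finset.card_le_univ s

lemma main_width (O : PartialOrder α) (x : α) (hx : isMinimal O x) (a' b' : ℕ) :
    pwidth (BigT α a' b') (RordD α O x a' b') ≤ max (pwidth α O) 3 := by
  unfold pwidth
  apply csSup_le
  · exact ⟨0, ∅, fun a ha => absurd ha (Finset.notMem_empty a), Finset.card_empty⟩
  · rintro N ⟨s, hs, rfl⟩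
    by_cases hB : ∃ c : Fin b', (Sum.inr c : BigT α a' b') ∈ s
    · obtain ⟨c, hc⟩ := hB
      have hsub : s ⊆ {Sum.inr c, yyD α a' b'} := by
        intro w hw
        rcases w with ((z | (u | j)) | c')
        · exact absurd id (hs _ hc _ hw (by simp))
        · rcases u
          simp [yyD]
        · exact absurd id (hs _ hc _ hw (by simp))
        · rcases eq_or_ne c' c with rfl | hne
          · simp
          · rcases le_total c c' with hle | hle
            · exact absurd hle (hs _ hc _ hw (by simpa using hne.symm))
            · exact absurd hle (hs _ hw _ hc (by simpa using hne))
      have h2 : s.card ≤ 2 := by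
        calc s.card ≤ ({Sum.inr c, yyD α a' b'} : Finset (BigT α a' b')).card :=
              Finset.card_le_card hsub
          _ ≤ 2 := (Finset.card_insert_le _ _).trans (by simp)
      exact le_trans (by omega) (le_max_right (pwidth α O) 3)
    · push_neg at hB
      by_cases hA : ∃ j : Fin a', (Sum.inl (Sum.inr (Sum.inr j)) : BigT α a' b') ∈ s
      · obtain ⟨j, hj⟩ := hA
        have hsub : s ⊆ {Sum.inl (Sum.inr (Sum.inr j)), Sum.inl (Sum.inl x), yyD α a' b'} := by
          intro w hw
          rcases w with ((z | (u | j')) | c')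
          · rcases eq_or_ne z x with rfl | hz
            · simp
            · exact absurd (fun h => hz (hx z h)) (hs _ hj _ hw (by simp))
          · rcases u
            simp [yyD]
          · rcases eq_or_ne j' j with rfl | hne
            · simp
            · rcases le_total j j' with hle | hle
              · exact absurd hle (hs _ hj _ hw (by simpa using hne.symm))
              · exact absurd hle (hs _ hw _ hj (by simpa using hne))
          · exact absurd hw (hB c')
        have h2 : s.card ≤ 3 := by
          calc s.card ≤ _ := Finset.card_le_card hsub
            _ ≤ 3 := by
              have h1 := Finset.card_insert_le (Sum.inl (Sum.inr (Sum.inr j)) : BigT α a' b')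
                {Sum.inl (Sum.inl x), yyD α a' b'}
              have h2 := Finset.card_insert_le (Sum.inl (Sum.inl x) : BigT α a' b')
                {yyD α a' b'}
              have h3 : ({yyD α a' b'} : Finset (BigT α a' b')).card = 1 :=
                Finset.card_singleton _
              omega
        exact le_trans h2 (le_max_right (pwidth α O) 3)
      · push_neg at hA
        by_cases hY : (yyD α a' b') ∈ s
        · have hsub : s ⊆ {yyD α a' b', Sum.inl (Sum.inl x)} := by
            intro w hw
            rcases w with ((z | (u | j')) | c')
            · rcases eq_or_ne z x with rfl | hz
              · simp
              · exact absurd (fun h => hz (hx z h)) (hs _ hY _ hw (by simp [yyD]))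
            · rcases u
              simp [yyD]
            · exact absurd hw (hA j')
            · exact absurd hw (hB c')
          have h2 : s.card ≤ 2 := by
            calc s.card ≤ _ := Finset.card_le_card hsub
              _ ≤ 2 := (Finset.card_insert_le _ _).trans (by simp)
          exact le_trans (by omega) (le_max_right (pwidth α O) 3)
        · have hall : ∀ w ∈ s, ∃ z : α, w = Sum.inl (Sum.inl z) := by
            intro w hw
            rcases w with ((z | (u | j')) | c')
            · exact ⟨z, rfl⟩
            · rcases u; exact absurd hw hY
            · exact absurd hw (hA j')
            · exact absurd hw (hB c')
          set f : BigT α a' b' → α := fun w => match w with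
            | .inl (.inl z) => z
            | _ => x with hf
          have hinj : Set.InjOn f s := by
            intro w hw w' hw' hff
            obtain ⟨z, rfl⟩ := hall w hw
            obtain ⟨z', rfl⟩ := hall w' hw'
            simp only [hf] at hff
            rw [hff]
          have hcard : (s.image f).card = s.card := Finset.card_image_of_injOn hinj
          have hanti : ∀ z ∈ s.image f, ∀ z' ∈ s.image f, z ≠ z' → ¬ O.le z z' := by
            intro z hz z' hz' hne hle
            obtain ⟨w, hw, hfw⟩ := Finset.mem_image.mp hz
            obtain ⟨w', hw', hfw'⟩ := Finset.mem_image.mp hz'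
            obtain ⟨zz, rfl⟩ := hall w hw
            obtain ⟨zz', rfl⟩ := hall w' hw'
            simp only [hf] at hfw hfw'
            subst hfw hfw'
            exact hs _ hw _ hw' (by simpa using hne) hle
          have hmem : s.card ∈ {n : ℕ | ∃ t : Finset α,
              (∀ a ∈ t, ∀ b ∈ t, a ≠ b → ¬ O.le a b) ∧ t.card = n} :=
            ⟨s.image f, hanti, hcard⟩
          exact le_trans (le_csSup (pwidth_bdd α O) hmem) (le_max_left _ 3)

end WidthCard
/-- For `R = C_{b−a} <_y (Q <_x P)` where `Q = y ⊕ C_{a−1}`, `x` minimal in `P`,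
and `b ≥ a ≥ 1`: `e(R−y) = e(P) + (a−1)·e(P−x)`,
`e(R) = b·e(R−y) + a·e(P−x)`, `|R| = n + b`, and
`width(R) ≤ max {width(P), 3}`. -/
theorem hybrid_zigzag_sum (α : Type) [Fintype α] [DecidableEq α]
    (O : PartialOrder α) (x : α) (hx : isMinimal O x)
    (a b : ℕ) (ha : 1 ≤ a) (hab : a ≤ b) :
    eDel ((α ⊕ (Unit ⊕ Fin (a - 1))) ⊕ Fin (b - a))
        (hybOrder
          (hybOrder O
            (parOrder (inferInstance : PartialOrder Unit)
              (inferInstance : PartialOrder (Fin (a - 1)))) x)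
          (inferInstance : PartialOrder (Fin (b - a))) (Sum.inr (Sum.inl ())))
        (Sum.inl (Sum.inr (Sum.inl ()))) =
      eCount α O + (a - 1) * eDel α O x ∧
    eCount ((α ⊕ (Unit ⊕ Fin (a - 1))) ⊕ Fin (b - a))
        (hybOrder
          (hybOrder O
            (parOrder (inferInstance : PartialOrder Unit)
              (inferInstance : PartialOrder (Fin (a - 1)))) x)
          (inferInstance : PartialOrder (Fin (b - a))) (Sum.inr (Sum.inl ()))) =
      b * eDel ((α ⊕ (Unit ⊕ Fin (a - 1))) ⊕ Fin (b - a))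
        (hybOrder
          (hybOrder O
            (parOrder (inferInstance : PartialOrder Unit)
              (inferInstance : PartialOrder (Fin (a - 1)))) x)
          (inferInstance : PartialOrder (Fin (b - a))) (Sum.inr (Sum.inl ())))
        (Sum.inl (Sum.inr (Sum.inl ()))) + a * eDel α O x ∧
    Fintype.card ((α ⊕ (Unit ⊕ Fin (a - 1))) ⊕ Fin (b - a)) =
      Fintype.card α + b ∧
    pwidth ((α ⊕ (Unit ⊕ Fin (a - 1))) ⊕ Fin (b - a))
        (hybOrder
          (hybOrder O
            (parOrder (inferInstance : PartialOrder Unit)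
              (inferInstance : PartialOrder (Fin (a - 1)))) x)
          (inferInstance : PartialOrder (Fin (b - a))) (Sum.inr (Sum.inl ()))) ≤
      max (pwidth α O) 3 := by
  have h1 := main1 O x hx (a - 1) (b - a)
  have h2 := main2 O x hx (a - 1) (b - a)
  have e1 : a - 1 + 1 + (b - a) = b := by omega
  have e2 : a - 1 + 1 = a := by omega
  rw [e1, e2] at h2
  refine ⟨h1, h2, ?_, main_width O x hx (a - 1) (b - a)⟩
  have h3 : Fintype.card ((α ⊕ (Unit ⊕ Fin (a - 1))) ⊕ Fin (b - a)) =
      Fintype.card α + (1 + (a - 1)) + (b - a) := by simp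
  omega
end

section
/- Let P, Q be finite posets with |P| = n, |Q| = n', x a minimal element of P, y a minimal element of Q. Define the flip-flop poset R on (P−x) ∪ (Q−y) ∪ {z,v}: take the dual order on P−x and the order on Q−y; put p ≺ z for every p ∈ P−x with x ≺ p in P; put z ≺ q for every q ∈ Q−y with y ≺ q in Q; put p ≺ v ≺ q for all p ∈ P−x, q ∈ Q−y; and make z, v incomparable. Then e(R) = e(P)·e(Q−y) + e(P−x)·e(Q), e(R−z) = e(P−x)·e(Q−y), |R| = n + n', and width(R) ≤ width(P) + width(Q). -/
section Infra

open Function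

/-- Trivial order on `Unit`. -/
def unitOrder : PartialOrder Unit where
  le _ _ := True
  lt _ _ := False
  lt_iff_le_not_ge := fun _ _ => ⟨False.elim, fun h => h.2 trivial⟩
  le_refl _ := trivial
  le_trans _ _ _ _ _ := trivial
  le_antisymm _ _ _ _ := rfl

lemma finCongr_le_finCongr {m n : ℕ} (h : m = n) {i j : Fin m} :
    finCongr h i ≤ finCongr h j ↔ i ≤ j := by subst h; rfl

lemma card_pred_congr {γ δ : Type} (E : γ ≃ δ) {m n : ℕ} (hmn : m = n)
    (P : (γ ≃ Fin m) → Prop) (Q : (δ ≃ Fin n) → Prop)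
    (h : ∀ f : γ ≃ Fin m, P f ↔ Q ((E.symm.trans f).trans (finCongr hmn))) :
    Nat.card {f : γ ≃ Fin m // P f} = Nat.card {g : δ ≃ Fin n // Q g} := by
  refine Nat.card_congr (Equiv.subtypeEquiv
    ⟨fun f => (E.symm.trans f).trans (finCongr hmn),
     fun g => (E.trans g).trans (finCongr hmn.symm), ?_, ?_⟩ h)
  · intro f; ext a; simp
  · intro g; ext a; simp

lemma eCount_congr {γ δ : Type} [Fintype γ] [Fintype δ] (Og : PartialOrder γ) (Od : PartialOrder δ)
    (E : γ ≃ δ) (h : ∀ a b, Og.le a b ↔ Od.le (E a) (E b)) :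
    eCount γ Og = eCount δ Od := by
  have hmn : Fintype.card γ = Fintype.card δ := Fintype.card_congr E
  refine card_pred_congr E hmn _ _ (fun f => ?_)
  constructor
  · intro hf c d hcd
    have h2 : Og.le (E.symm c) (E.symm d) := by
      rw [h]; simpa using hcd
    show finCongr hmn (f (E.symm c)) ≤ finCongr hmn (f (E.symm d))
    exact (finCongr_le_finCongr hmn).2 (hf _ _ h2)
  · intro hf a b hab
    have := hf (E a) (E b) ((h a b).1 hab)
    have h3 : finCongr hmn (f (E.symm (E a))) ≤ finCongr hmn (f (E.symm (E b))) := this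
    rw [finCongr_le_finCongr] at h3
    simpa using h3

lemma eCount_dual {γ : Type} [Fintype γ] (O : PartialOrder γ) :
    eCount γ (dualOrder O) = eCount γ O := by
  unfold eCount
  refine Nat.card_congr (Equiv.subtypeEquiv
    ⟨fun f => f.trans Fin.revPerm, fun f => f.trans Fin.revPerm, ?_, ?_⟩ ?_)
  · intro f; ext a; simp
  · intro f; ext a; simp
  · intro f
    constructor
    · intro hf a b hab
      show (f a).rev ≤ (f b).rev
      rw [Fin.rev_le_rev]
      exact hf b a hab
    · intro hf a b hab
      have : (f b).rev ≤ (f a).rev := hf b a hab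
      rwa [Fin.rev_le_rev] at this

lemma eCount_unit (O : PartialOrder Unit) : eCount Unit O = 1 := by
  unfold eCount
  rw [Nat.card_eq_one_iff_unique]
  have h1 : Fintype.card Unit = 1 := rfl
  constructor
  · constructor
    intro f g
    apply Subtype.ext; ext a
    have h2 := (f.1 a).isLt
    have h3 := (g.1 a).isLt
    omega
  · refine ⟨⟨(Equiv.ofUnique Unit (Fin 1)).trans (finCongr h1.symm), ?_⟩⟩
    intro a b _
    exact le_of_eq (congrArg _ (Subsingleton.elim a b))

end Infra


lemma eCount_linOrder {γ δ : Type} [Fintype γ] [Fintype δ]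
    (O1 : PartialOrder γ) (O2 : PartialOrder δ) :
    eCount (γ ⊕ δ) (linOrder O1 O2) = eCount γ O1 * eCount δ O2 := by
  classical
  have hN : Fintype.card (γ ⊕ δ) = Fintype.card γ + Fintype.card δ := Fintype.card_sum
  set n1 := Fintype.card γ with hn1
  set n2 := Fintype.card δ with hn2
  set N := Fintype.card (γ ⊕ δ) with hNd
  have happ1 : ∀ (g1 : γ ≃ Fin n1) (g2 : δ ≃ Fin n2) (a : γ),
      ((((Equiv.sumCongr g1 g2).trans finSumFinEquiv).trans (finCongr hN.symm)) (Sum.inl a) : ℕ)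
        = (g1 a : ℕ) := by
    intro g1 g2 a
    simp only [Equiv.trans_apply, Equiv.sumCongr_apply, Sum.map_inl,
      finSumFinEquiv_apply_left, finCongr_apply, Fin.coe_cast, Fin.coe_castAdd]
  have happ2 : ∀ (g1 : γ ≃ Fin n1) (g2 : δ ≃ Fin n2) (b : δ),
      ((((Equiv.sumCongr g1 g2).trans finSumFinEquiv).trans (finCongr hN.symm)) (Sum.inr b) : ℕ)
        = n1 + (g2 b : ℕ) := by
    intro g1 g2 b
    simp only [Equiv.trans_apply, Equiv.sumCongr_apply, Sum.map_inr,
      finSumFinEquiv_apply_right, finCongr_apply, Fin.coe_cast, Fin.coe_natAdd]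
  let Ψ : ({f : γ ≃ Fin n1 // ∀ a b : γ, O1.le a b → f a ≤ f b} ×
           {g : δ ≃ Fin n2 // ∀ a b : δ, O2.le a b → g a ≤ g b}) →
      {F : (γ ⊕ δ) ≃ Fin N // ∀ a b : γ ⊕ δ, (linOrder O1 O2).le a b → F a ≤ F b} :=
    fun ⟨⟨g1, hg1⟩, ⟨g2, hg2⟩⟩ => ⟨((Equiv.sumCongr g1 g2).trans finSumFinEquiv).trans (finCongr hN.symm), by
      rintro (a | b) (a' | b') hle
      · have := hg1 a a' hle
        rw [Fin.le_def, happ1, happ1]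
        exact this
      · have h1 := (g1 a).isLt
        rw [Fin.le_def, happ1, happ2]
        omega
      · exact hle.elim
      · have := hg2 b b' hle
        rw [Fin.le_def, happ2, happ2]
        omega⟩
  have hinj : Function.Injective Ψ := by
    rintro ⟨⟨g1, hg1⟩, ⟨g2, hg2⟩⟩ ⟨⟨g1', hg1'⟩, ⟨g2', hg2'⟩⟩ h
    have hEq : ((Equiv.sumCongr g1 g2).trans finSumFinEquiv).trans (finCongr hN.symm)
        = ((Equiv.sumCongr g1' g2').trans finSumFinEquiv).trans (finCongr hN.symm) :=
      congrArg Subtype.val h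
    refine Prod.ext ?_ ?_ <;> apply Subtype.ext <;> ext t
    · have h2 := congrArg Fin.val (DFunLike.congr_fun hEq (Sum.inl t))
      rw [happ1, happ1] at h2
      exact h2
    · have h2 := congrArg Fin.val (DFunLike.congr_fun hEq (Sum.inr t))
      rw [happ2, happ2] at h2
      exact Nat.add_left_cancel h2
  have hsurj : Function.Surjective Ψ := by
    rintro ⟨F, hF⟩
    have hlt : ∀ (a : γ) (b : δ), (F (Sum.inl a) : ℕ) < (F (Sum.inr b) : ℕ) := by
      intro a b
      have hle : F (Sum.inl a) ≤ F (Sum.inr b) := hF _ _ trivial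
      have hne : (F (Sum.inl a) : ℕ) ≠ (F (Sum.inr b) : ℕ) := by
        intro h; exact Sum.inl_ne_inr (F.injective (Fin.ext h))
      exact lt_of_le_of_ne hle hne
    have key1 : ∀ b : δ, n1 ≤ (F (Sum.inr b) : ℕ) := by
      intro b
      have : Fintype.card γ ≤ Fintype.card (Fin (F (Sum.inr b) : ℕ)) := by
        refine Fintype.card_le_of_injective (fun a => ⟨(F (Sum.inl a) : ℕ), hlt a b⟩) ?_
        intro a a' h
        have hval : (F (Sum.inl a) : ℕ) = (F (Sum.inl a') : ℕ) := by
          simpa using congrArg Fin.val h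
        exact Sum.inl.inj (F.injective (Fin.ext hval))
      simpa using this
    have key2 : ∀ a : γ, (F (Sum.inl a) : ℕ) < n1 := by
      intro a
      set v0 := (F (Sum.inl a) : ℕ) with hv0
      have hcard : Fintype.card δ ≤ Fintype.card (Fin (N - (v0 + 1))) := by
        refine Fintype.card_le_of_injective
          (fun b => ⟨(F (Sum.inr b) : ℕ) - (v0 + 1), by
            have h1 := (F (Sum.inr b)).isLt
            have h2 := hlt a b
            omega⟩) ?_
        intro b b' h
        have hvals : (F (Sum.inr b) : ℕ) - (v0 + 1) = (F (Sum.inr b') : ℕ) - (v0 + 1) := by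
          simpa using congrArg Fin.val h
        have hb := hlt a b
        have hb' := hlt a b'
        have : (F (Sum.inr b) : ℕ) = (F (Sum.inr b') : ℕ) := by omega
        exact Sum.inr.inj (F.injective (Fin.ext this))
      simp only [Fintype.card_fin] at hcard
      have hvN : v0 < N := (F (Sum.inl a)).isLt
      omega
    have bij1 : Function.Bijective (fun a : γ => (⟨(F (Sum.inl a) : ℕ), key2 a⟩ : Fin n1)) := by
      rw [Fintype.bijective_iff_injective_and_card]
      refine ⟨?_, by simp [hn1]⟩
      intro a a' h
      have hval : (F (Sum.inl a) : ℕ) = (F (Sum.inl a') : ℕ) := by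
        simpa using congrArg Fin.val h
      exact Sum.inl.inj (F.injective (Fin.ext hval))
    have bij2 : Function.Bijective (fun b : δ => (⟨(F (Sum.inr b) : ℕ) - n1, by
        have h1 := (F (Sum.inr b)).isLt
        have h2 := key1 b
        omega⟩ : Fin n2)) := by
      rw [Fintype.bijective_iff_injective_and_card]
      refine ⟨?_, by simp [hn2]⟩
      intro b b' h
      have hvals : (F (Sum.inr b) : ℕ) - n1 = (F (Sum.inr b') : ℕ) - n1 := by
        simpa using congrArg Fin.val h
      have hb := key1 b
      have hb' := key1 b'
      have : (F (Sum.inr b) : ℕ) = (F (Sum.inr b') : ℕ) := by omega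
      exact Sum.inr.inj (F.injective (Fin.ext this))
    refine ⟨⟨⟨Equiv.ofBijective _ bij1, ?_⟩, ⟨Equiv.ofBijective _ bij2, ?_⟩⟩, ?_⟩
    · intro a a' h
      have := hF (Sum.inl a) (Sum.inl a') h
      rw [Fin.le_def] at this ⊢
      simpa only [Equiv.ofBijective_apply] using this
    · intro b b' h
      have h2 : F (Sum.inr b) ≤ F (Sum.inr b') := hF (Sum.inr b) (Sum.inr b') h
      rw [Fin.le_def] at h2 ⊢
      simp only [Equiv.ofBijective_apply]
      have hb := key1 b
      omega
    · apply Subtype.ext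
      apply Equiv.ext
      rintro (a | b) <;> apply Fin.ext
      · show ((((Equiv.sumCongr _ _).trans finSumFinEquiv).trans (finCongr hN.symm)) (Sum.inl a) : ℕ)
          = (F (Sum.inl a) : ℕ)
        rw [happ1]
        simp only [Equiv.ofBijective_apply]
      · show ((((Equiv.sumCongr _ _).trans finSumFinEquiv).trans (finCongr hN.symm)) (Sum.inr b) : ℕ)
          = (F (Sum.inr b) : ℕ)
        rw [happ2]
        simp only [Equiv.ofBijective_apply]
        have hb := key1 b
        omega
  have := Nat.card_eq_of_bijective Ψ ⟨hinj, hsurj⟩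
  rw [Nat.card_prod] at this
  exact this.symm


section FFEquivs

variable {α β : Type} [DecidableEq α] [DecidableEq β]

/-- Equivalence used for counting extensions with `z` below `v`. -/
def ffE1 (x : α) (y : β) :
    FlipCarrier α β x y ≃ (α ⊕ (Unit ⊕ {b : β // b ≠ y})) where
  toFun s := match s with
    | .inl (.inl p) => .inl p.1
    | .inl (.inr q) => .inr (.inr q)
    | .inr false => .inl x
    | .inr true => .inr (.inl ())
  invFun t := match t with
    | .inl a => if h : a = x then .inr false else .inl (.inl ⟨a, h⟩)
    | .inr (.inl _) => .inr true
    | .inr (.inr q) => .inl (.inr q)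
  left_inv := by
    rintro ((p | q) | (_ | _))
    · simp [p.2]
    · rfl
    · simp
    · rfl
  right_inv := by
    rintro (a | (u | q))
    · by_cases h : a = x
      · subst h; simp
      · simp [h]
    · rfl
    · rfl

lemma ffE1_symm_inl_ne (x : α) (y : β) (a : α) (h : a ≠ x) :
    (ffE1 (β := β) x y).symm (Sum.inl a) = Sum.inl (Sum.inl ⟨a, h⟩) := by
  rw [Equiv.symm_apply_eq]; rfl

lemma ffE1_symm_x (x : α) (y : β) :
    (ffE1 (β := β) x y).symm (Sum.inl x) = Sum.inr false := by
  rw [Equiv.symm_apply_eq]; rfl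

lemma ffE1_symm_u (x : α) (y : β) (u : Unit) :
    (ffE1 (β := β) x y).symm (Sum.inr (Sum.inl u)) = Sum.inr true := by
  rw [Equiv.symm_apply_eq]; rfl

lemma ffE1_symm_q (x : α) (y : β) (q : {b : β // b ≠ y}) :
    (ffE1 (β := β) x y).symm (Sum.inr (Sum.inr q)) = Sum.inl (Sum.inr q) := by
  rw [Equiv.symm_apply_eq]; rfl

/-- Equivalence used for counting extensions with `v` below `z`. -/
def ffE2 (x : α) (y : β) :
    FlipCarrier α β x y ≃ ({a : α // a ≠ x} ⊕ (Unit ⊕ β)) where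
  toFun s := match s with
    | .inl (.inl p) => .inl p
    | .inl (.inr q) => .inr (.inr q.1)
    | .inr false => .inr (.inr y)
    | .inr true => .inr (.inl ())
  invFun t := match t with
    | .inl p => .inl (.inl p)
    | .inr (.inl _) => .inr true
    | .inr (.inr b) => if h : b = y then .inr false else .inl (.inr ⟨b, h⟩)
  left_inv := by
    rintro ((p | q) | (_ | _))
    · rfl
    · simp [q.2]
    · simp
    · rfl
  right_inv := by
    rintro (p | (u | b))
    · rfl
    · rfl
    · by_cases h : b = y
      · subst h; simp
      · simp [h]

lemma ffE2_symm_p (x : α) (y : β) (p : {a : α // a ≠ x}) :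
    (ffE2 x y).symm (Sum.inl p) = Sum.inl (Sum.inl p) := by
  rw [Equiv.symm_apply_eq]; rfl

lemma ffE2_symm_u (x : α) (y : β) (u : Unit) :
    (ffE2 x y).symm (Sum.inr (Sum.inl u)) = Sum.inr true := by
  rw [Equiv.symm_apply_eq]; rfl

lemma ffE2_symm_b_ne (x : α) (y : β) (b : β) (h : b ≠ y) :
    (ffE2 x y).symm (Sum.inr (Sum.inr b)) = Sum.inl (Sum.inr ⟨b, h⟩) := by
  rw [Equiv.symm_apply_eq]; rfl

lemma ffE2_symm_y (x : α) (y : β) :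
    (ffE2 x y).symm (Sum.inr (Sum.inr y)) = Sum.inr false := by
  rw [Equiv.symm_apply_eq]; rfl

/-- Equivalence used for counting extensions of `R − z`. -/
def ffE3 (x : α) (y : β) :
    {s : FlipCarrier α β x y // s ≠ Sum.inr false} ≃
      ({a : α // a ≠ x} ⊕ (Unit ⊕ {b : β // b ≠ y})) where
  toFun s := match s with
    | ⟨.inl (.inl p), _⟩ => .inl p
    | ⟨.inl (.inr q), _⟩ => .inr (.inr q)
    | ⟨.inr true, _⟩ => .inr (.inl ())
    | ⟨.inr false, h⟩ => absurd rfl h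
  invFun t := match t with
    | .inl p => ⟨.inl (.inl p), by simp⟩
    | .inr (.inr q) => ⟨.inl (.inr q), by simp⟩
    | .inr (.inl _) => ⟨.inr true, by simp⟩
  left_inv := by
    rintro ⟨((p | q) | (_ | _)), h⟩
    · rfl
    · rfl
    · exact absurd rfl h
    · rfl
  right_inv := by
    rintro (p | (u | q)) <;> rfl

end FFEquivs

section Width

lemma le_pwidth {γ : Type} [Fintype γ] (O : PartialOrder γ) {s : Finset γ}
    (hs : ∀ a ∈ s, ∀ b ∈ s, a ≠ b → ¬ O.le a b) : s.card ≤ pwidth γ O := by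
  refine le_csSup ⟨Fintype.card γ, ?_⟩ ⟨s, hs, rfl⟩
  rintro n ⟨t, _, rfl⟩
  exact Finset.card_le_univ t

lemma pwidth_le {γ : Type} [Fintype γ] (O : PartialOrder γ) {m : ℕ}
    (h : ∀ s : Finset γ, (∀ a ∈ s, ∀ b ∈ s, a ≠ b → ¬ O.le a b) → s.card ≤ m) :
    pwidth γ O ≤ m := by
  refine csSup_le ⟨0, ∅, fun a ha => absurd ha (Finset.notMem_empty a), rfl⟩ ?_
  rintro n ⟨s, hs, rfl⟩
  exact h s hs

lemma one_le_pwidth {γ : Type} [Fintype γ] (O : PartialOrder γ) (c : γ) :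
    1 ≤ pwidth γ O := by
  classical
  have h := le_pwidth O (s := {c}) ?_
  · simpa using h
  · intro a ha b hb hne
    rw [Finset.mem_singleton] at ha hb
    exact absurd (ha.trans hb.symm) hne

end Width

section Split

lemma card_split {γ : Type} [Finite γ] (p q : γ → Prop) :
    Nat.card {a : γ // p a} =
      Nat.card {a : γ // p a ∧ q a} + Nat.card {a : γ // p a ∧ ¬ q a} := by
  classical
  rw [← Nat.card_sum]
  refine Nat.card_congr (Equiv.symm ⟨fun t => match t with
      | .inl a => ⟨a.1, a.2.1⟩
      | .inr a => ⟨a.1, a.2.1⟩,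
    fun a => if h : q a.1 then .inl ⟨a.1, a.2, h⟩ else .inr ⟨a.1, a.2, h⟩, ?_, ?_⟩)
  · rintro (⟨a, ha, hq⟩ | ⟨a, ha, hq⟩)
    · simp [hq]
    · simp [hq]
  · rintro ⟨a, ha⟩
    by_cases h : q a <;> simp [h]

end Split

/-- For the flip-flop poset `R` built from `P` (with minimal `x`) and `Q` (with
minimal `y`): `e(R) = e(P)·e(Q−y) + e(P−x)·e(Q)`, `e(R−z) = e(P−x)·e(Q−y)`,
`|R| = n + n'`, and `width(R) ≤ width(P) + width(Q)`.
Here `z = Sum.inr false`. -/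
theorem flipflop_linext (α β : Type) [Fintype α] [Fintype β]
    [DecidableEq α] [DecidableEq β]
    (O : PartialOrder α) (O' : PartialOrder β)
    (x : α) (hx : isMinimal O x) (y : β) (hy : isMinimal O' y) :
    eCount (FlipCarrier α β x y) (ffOrder O O' x y) =
        eCount α O * eDel β O' y + eDel α O x * eCount β O' ∧
      eDel (FlipCarrier α β x y) (ffOrder O O' x y) (Sum.inr false) =
        eDel α O x * eDel β O' y ∧
      Fintype.card (FlipCarrier α β x y) = Fintype.card α + Fintype.card β ∧
      pwidth (FlipCarrier α β x y) (ffOrder O O' x y) ≤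
        pwidth α O + pwidth β O' := by
  classical
  refine ⟨?_, ?_, ?_, ?_⟩
  · -- e(R) = e(P)·e(Q−y) + e(P−x)·e(Q)
    have hc1 : Fintype.card (FlipCarrier α β x y) =
        Fintype.card (α ⊕ (Unit ⊕ {b : β // b ≠ y})) := Fintype.card_congr (ffE1 x y)
    have hc2 : Fintype.card (FlipCarrier α β x y) =
        Fintype.card ({a : α // a ≠ x} ⊕ (Unit ⊕ β)) := Fintype.card_congr (ffE2 x y)
    have part1 : Nat.card {f : FlipCarrier α β x y ≃ Fin (Fintype.card (FlipCarrier α β x y)) //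
        (∀ a b, (ffOrder O O' x y).le a b → f a ≤ f b) ∧ f (Sum.inr false) < f (Sum.inr true)} =
        eCount (α ⊕ (Unit ⊕ {b : β // b ≠ y}))
          (linOrder (dualOrder O) (linOrder unitOrder (delOrder O' y))) := by
      refine card_pred_congr (ffE1 x y) hc1 _ _ ?_
      intro f
      constructor
      · rintro ⟨hf, hzv⟩ c d hcd
        show finCongr hc1 (f ((ffE1 x y).symm c)) ≤ finCongr hc1 (f ((ffE1 x y).symm d))
        rw [finCongr_le_finCongr]
        rcases c with a | (u | q)
        · rcases d with a' | (u' | q')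
          · by_cases ha : a = x <;> by_cases ha' : a' = x
            · subst ha; subst ha'; exact le_refl _
            · subst ha; exact absurd (hx a' hcd) ha'
            · rw [ffE1_symm_inl_ne _ _ _ ha, ha', ffE1_symm_x]
              exact hf _ _ (show O.le x a from ha' ▸ hcd)
            · rw [ffE1_symm_inl_ne _ _ _ ha, ffE1_symm_inl_ne _ _ _ ha']
              exact hf _ _ hcd
          · by_cases ha : a = x
            · subst ha; rw [ffE1_symm_x, ffE1_symm_u]; exact le_of_lt hzv
            · rw [ffE1_symm_inl_ne _ _ _ ha, ffE1_symm_u]; exact hf _ _ trivial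
          · by_cases ha : a = x
            · subst ha
              rw [ffE1_symm_x, ffE1_symm_q]
              exact le_trans (le_of_lt hzv) (hf (Sum.inr true) (Sum.inl (Sum.inr q')) trivial)
            · rw [ffE1_symm_inl_ne _ _ _ ha, ffE1_symm_q]; exact hf _ _ trivial
        · rcases d with a' | (u' | q')
          · exact hcd.elim
          · rw [ffE1_symm_u]
          · rw [ffE1_symm_u, ffE1_symm_q]; exact hf _ _ trivial
        · rcases d with a' | (u' | q')
          · exact hcd.elim
          · exact hcd.elim
          · rw [ffE1_symm_q, ffE1_symm_q]; exact hf _ _ hcd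
      · intro hg
        have hkey : ∀ s t : FlipCarrier α β x y,
            (linOrder (dualOrder O) (linOrder unitOrder (delOrder O' y))).le
              ((ffE1 x y) s) ((ffE1 x y) t) → f s ≤ f t := by
          intro s t h
          have h2 := hg _ _ h
          simp only [Equiv.trans_apply, Equiv.symm_apply_apply, finCongr_le_finCongr] at h2
          exact h2
        refine ⟨?_, ?_⟩
        · rintro ((p | q) | (_ | _)) ((p' | q') | (_ | _)) hst <;>
            exact hkey _ _ (by first
              | exact hst
              | exact hst.elim
              | trivial
              | exact O.le_refl x
              | exact Bool.noConfusion hst)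
        · exact lt_of_le_of_ne (hkey (Sum.inr false) (Sum.inr true) trivial)
            (fun hh => Bool.noConfusion (Sum.inr.inj (f.injective hh)))
    have part2 : Nat.card {f : FlipCarrier α β x y ≃ Fin (Fintype.card (FlipCarrier α β x y)) //
        (∀ a b, (ffOrder O O' x y).le a b → f a ≤ f b) ∧ ¬ f (Sum.inr false) < f (Sum.inr true)} =
        eCount ({a : α // a ≠ x} ⊕ (Unit ⊕ β))
          (linOrder (dualOrder (delOrder O x)) (linOrder unitOrder O')) := by
      refine card_pred_congr (ffE2 x y) hc2 _ _ ?_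
      intro f
      constructor
      · rintro ⟨hf, hnzv⟩ c d hcd
        have hvz : f (Sum.inr true) < f (Sum.inr false) :=
          lt_of_le_of_ne (not_lt.mp hnzv)
            (fun hh => Bool.noConfusion (Sum.inr.inj (f.injective hh)))
        show finCongr hc2 (f ((ffE2 x y).symm c)) ≤ finCongr hc2 (f ((ffE2 x y).symm d))
        rw [finCongr_le_finCongr]
        rcases c with p | (u | b)
        · rcases d with p' | (u' | b')
          · rw [ffE2_symm_p, ffE2_symm_p]; exact hf _ _ hcd
          · rw [ffE2_symm_p, ffE2_symm_u]; exact hf _ _ trivial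
          · by_cases hb : b' = y
            · subst hb
              rw [ffE2_symm_p, ffE2_symm_y]
              exact le_trans (hf _ _ trivial) (le_of_lt hvz)
            · rw [ffE2_symm_p, ffE2_symm_b_ne _ _ _ hb]; exact hf _ _ trivial
        · rcases d with p' | (u' | b')
          · exact hcd.elim
          · rw [ffE2_symm_u]
          · by_cases hb : b' = y
            · subst hb; rw [ffE2_symm_u, ffE2_symm_y]; exact le_of_lt hvz
            · rw [ffE2_symm_u, ffE2_symm_b_ne _ _ _ hb]; exact hf _ _ trivial
        · rcases d with p' | (u' | b')
          · exact hcd.elim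
          · exact hcd.elim
          · by_cases hb : b = y <;> by_cases hb' : b' = y
            · subst hb; subst hb'; exact le_refl _
            · subst hb
              rw [ffE2_symm_y, ffE2_symm_b_ne _ _ _ hb']
              exact hf _ _ hcd
            · subst hb'; exact absurd (hy b hcd) hb
            · rw [ffE2_symm_b_ne _ _ _ hb, ffE2_symm_b_ne _ _ _ hb']
              exact hf _ _ hcd
      · intro hg
        have hkey : ∀ s t : FlipCarrier α β x y,
            (linOrder (dualOrder (delOrder O x)) (linOrder unitOrder O')).le
              ((ffE2 x y) s) ((ffE2 x y) t) → f s ≤ f t := by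
          intro s t h
          have h2 := hg _ _ h
          simp only [Equiv.trans_apply, Equiv.symm_apply_apply, finCongr_le_finCongr] at h2
          exact h2
        refine ⟨?_, ?_⟩
        · rintro ((p | q) | (_ | _)) ((p' | q') | (_ | _)) hst <;>
            exact hkey _ _ (by first
              | exact hst
              | exact hst.elim
              | trivial
              | exact O'.le_refl y
              | exact Bool.noConfusion hst)
        · exact not_lt.mpr (hkey (Sum.inr true) (Sum.inr false) trivial)
    have hL1 : eCount (α ⊕ (Unit ⊕ {b : β // b ≠ y}))
        (linOrder (dualOrder O) (linOrder unitOrder (delOrder O' y))) =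
        eCount α O * eDel β O' y := by
      rw [eCount_linOrder, eCount_linOrder, eCount_dual, eCount_unit, one_mul]
      rfl
    have hL2 : eCount ({a : α // a ≠ x} ⊕ (Unit ⊕ β))
        (linOrder (dualOrder (delOrder O x)) (linOrder unitOrder O')) =
        eDel α O x * eCount β O' := by
      rw [eCount_linOrder, eCount_linOrder, eCount_dual, eCount_unit, one_mul]
      rfl
    calc eCount (FlipCarrier α β x y) (ffOrder O O' x y)
        = Nat.card {f : FlipCarrier α β x y ≃ Fin (Fintype.card (FlipCarrier α β x y)) //
            (∀ a b, (ffOrder O O' x y).le a b → f a ≤ f b) ∧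
              f (Sum.inr false) < f (Sum.inr true)} +
          Nat.card {f : FlipCarrier α β x y ≃ Fin (Fintype.card (FlipCarrier α β x y)) //
            (∀ a b, (ffOrder O O' x y).le a b → f a ≤ f b) ∧
              ¬ f (Sum.inr false) < f (Sum.inr true)} := card_split _ _
      _ = eCount α O * eDel β O' y + eDel α O x * eCount β O' := by
          rw [part1, part2, hL1, hL2]
  · -- e(R − z) = e(P−x)·e(Q−y)
    have hiff : ∀ s t : {s : FlipCarrier α β x y // s ≠ Sum.inr false},
        (delOrder (ffOrder O O' x y) (Sum.inr false)).le s t ↔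
        (linOrder (dualOrder (delOrder O x)) (linOrder unitOrder (delOrder O' y))).le
          ((ffE3 x y) s) ((ffE3 x y) t) := by
      rintro ⟨((p | q) | (_ | _)), hs⟩ ⟨((p' | q') | (_ | _)), ht⟩ <;>
        first
          | exact absurd rfl hs
          | exact absurd rfl ht
          | exact Iff.rfl
          | (constructor <;> intro <;> trivial)
    have h0 := eCount_congr (delOrder (ffOrder O O' x y) (Sum.inr false))
      (linOrder (dualOrder (delOrder O x)) (linOrder unitOrder (delOrder O' y)))
      (ffE3 x y) hiff
    show eCount _ (delOrder (ffOrder O O' x y) (Sum.inr false)) = _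
    rw [h0, eCount_linOrder, eCount_linOrder, eCount_dual, eCount_unit, one_mul]
    rfl
  · -- cardinality
    have h1 : Fintype.card {a : α // a ≠ x} = Fintype.card α - 1 := by
      simp [Fintype.card_subtype_compl]
    have h2 : Fintype.card {b : β // b ≠ y} = Fintype.card β - 1 := by
      simp [Fintype.card_subtype_compl]
    have hα : 1 ≤ Fintype.card α := Fintype.card_pos_iff.mpr ⟨x⟩
    have hβ : 1 ≤ Fintype.card β := Fintype.card_pos_iff.mpr ⟨y⟩
    have h3 : Fintype.card (FlipCarrier α β x y) =
        (Fintype.card {a : α // a ≠ x} + Fintype.card {b : β // b ≠ y}) + 2 := by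
      simp [Fintype.card_sum]
    omega
  · -- width
    refine pwidth_le _ ?_
    intro s hs
    by_cases hP : ∃ p : {a : α // a ≠ x}, Sum.inl (Sum.inl p) ∈ s
    · obtain ⟨p0, hp0⟩ := hP
      have hv : Sum.inr true ∉ s := fun hv =>
        hs _ hp0 _ hv (by simp) trivial
      have hq : ∀ q : {b : β // b ≠ y}, Sum.inl (Sum.inr q) ∉ s := fun q hq =>
        hs _ hp0 _ hq (by simp) trivial
      have hshape : ∀ t ∈ s, (∃ p : {a : α // a ≠ x}, t = Sum.inl (Sum.inl p)) ∨
          t = Sum.inr false := by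
        intro t ht
        rcases t with ((p | q) | (_ | _))
        · exact Or.inl ⟨p, rfl⟩
        · exact absurd ht (hq q)
        · exact Or.inr rfl
        · exact absurd ht hv
      set g : FlipCarrier α β x y → α := fun t => match t with
        | .inl (.inl p) => p.1
        | _ => x with hgdef
      have hinj : Set.InjOn g s := by
        intro t ht t' ht' hgt
        rcases hshape t ht with ⟨p, rfl⟩ | rfl <;> rcases hshape t' ht' with ⟨p', rfl⟩ | rfl
        · simp only [g] at hgt
          exact congrArg (fun u => Sum.inl (Sum.inl u)) (Subtype.ext hgt)
        · simp only [g] at hgt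
          exact absurd hgt p.2
        · simp only [g] at hgt
          exact absurd hgt.symm p'.2
        · rfl
      have hanti : ∀ a ∈ s.image g, ∀ b ∈ s.image g, a ≠ b → ¬ O.le a b := by
        intro a ha b hb hne hle
        obtain ⟨ta, hta, rfl⟩ := Finset.mem_image.1 ha
        obtain ⟨tb, htb, rfl⟩ := Finset.mem_image.1 hb
        rcases hshape ta hta with ⟨p, rfl⟩ | rfl <;> rcases hshape tb htb with ⟨p', rfl⟩ | rfl
        · exact hs _ htb _ hta (fun hh => hne (congrArg g hh).symm) hle
        · exact absurd (hx _ hle) p.2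
        · exact hs _ htb _ hta (fun hh => hne (congrArg g hh).symm) hle
        · exact hne rfl
      calc s.card = (s.image g).card := (Finset.card_image_of_injOn hinj).symm
        _ ≤ pwidth α O := le_pwidth O hanti
        _ ≤ pwidth α O + pwidth β O' := Nat.le_add_right _ _
    · by_cases hQ : ∃ q : {b : β // b ≠ y}, Sum.inl (Sum.inr q) ∈ s
      · obtain ⟨q0, hq0⟩ := hQ
        have hv : Sum.inr true ∉ s := fun hv =>
          hs _ hv _ hq0 (by simp) trivial
        have hshape : ∀ t ∈ s, (∃ q : {b : β // b ≠ y}, t = Sum.inl (Sum.inr q)) ∨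
            t = Sum.inr false := by
          intro t ht
          rcases t with ((p | q) | (_ | _))
          · exact absurd ⟨p, ht⟩ hP
          · exact Or.inl ⟨q, rfl⟩
          · exact Or.inr rfl
          · exact absurd ht hv
        set g : FlipCarrier α β x y → β := fun t => match t with
          | .inl (.inr q) => q.1
          | _ => y with hgdef
        have hinj : Set.InjOn g s := by
          intro t ht t' ht' hgt
          rcases hshape t ht with ⟨q, rfl⟩ | rfl <;> rcases hshape t' ht' with ⟨q', rfl⟩ | rfl
          · simp only [g] at hgt
            exact congrArg (fun u => Sum.inl (Sum.inr u)) (Subtype.ext hgt)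
          · simp only [g] at hgt
            exact absurd hgt q.2
          · simp only [g] at hgt
            exact absurd hgt.symm q'.2
          · rfl
        have hanti : ∀ a ∈ s.image g, ∀ b ∈ s.image g, a ≠ b → ¬ O'.le a b := by
          intro a ha b hb hne hle
          obtain ⟨ta, hta, rfl⟩ := Finset.mem_image.1 ha
          obtain ⟨tb, htb, rfl⟩ := Finset.mem_image.1 hb
          rcases hshape ta hta with ⟨q, rfl⟩ | rfl <;> rcases hshape tb htb with ⟨q', rfl⟩ | rfl
          · exact hs _ hta _ htb (fun hh => hne (congrArg g hh)) hle
          · exact absurd (hy _ hle) q.2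
          · exact hs _ hta _ htb (fun hh => hne (congrArg g hh)) hle
          · exact hne rfl
        calc s.card = (s.image g).card := (Finset.card_image_of_injOn hinj).symm
          _ ≤ pwidth β O' := le_pwidth O' hanti
          _ ≤ pwidth α O + pwidth β O' := Nat.le_add_left _ _
      · have hsub : s ⊆ ({Sum.inr false, Sum.inr true} : Finset (FlipCarrier α β x y)) := by
          intro t ht
          rcases t with ((p | q) | (_ | _))
          · exact absurd ⟨p, ht⟩ hP
          · exact absurd ⟨q, ht⟩ hQ
          · simp
          · simp
        calc s.card ≤ ({Sum.inr false, Sum.inr true} : Finset (FlipCarrier α β x y)).card :=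
              Finset.card_le_card hsub
          _ ≤ 2 := Finset.card_insert_le _ _ |>.trans (by simp)
          _ ≤ pwidth α O + pwidth β O' :=
              Nat.add_le_add (one_le_pwidth O x) (one_le_pwidth O' y)
end

section
/- For every pair of coprime integers 1 ≤ c < d, there exists a finite poset P of width at most two and a minimal element x of P such that |P| = s(c/d), e(P) = d, and e(P−x) = c, where s(c/d) is the sum of the partial quotients of the simple continued fraction expansion of c/d. -/
set_option linter.unusedSectionVars false
set_option linter.unusedTactic false
set_option linter.unreachableTactic false
set_option linter.unusedVariables false


-- extension type with explicit index
def ExtA (γ : Type) [Fintype γ] (R : PartialOrder γ) (m : ℕ) : Type :=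
  {f : γ ≃ Fin m // ∀ a b : γ, R.le a b → f a ≤ f b}

instance (γ : Type) [Fintype γ] [DecidableEq γ] (R : PartialOrder γ) (m : ℕ) :
    Finite (ExtA γ R m) := by
  unfold ExtA; infer_instance

lemma eCount_eq_s12 (γ : Type) [Fintype γ] (R : PartialOrder γ) {m : ℕ}
    (hm : Fintype.card γ = m) : eCount γ R = Nat.card (ExtA γ R m) := by
  subst hm; rfl

section Strip
variable {γ : Type} [Fintype γ] [DecidableEq γ]

lemma card_strip (R : PartialOrder γ) (t : γ) (ht : isMinimal R t) (k : ℕ) :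
    Nat.card {f : ExtA γ R (k+1) // f.1 t = 0} =
      Nat.card (ExtA {g : γ // g ≠ t} (delOrder R t) k) := by
  apply Nat.card_congr
  refine ⟨fun F => ⟨⟨fun g => (F.1.1 g.1).pred
      (fun h => g.2 (F.1.1.injective (h.trans F.2.symm))), fun i =>
      ⟨F.1.1.symm i.succ, fun h =>
        Fin.succ_ne_zero i (show i.succ = (0 : Fin (k+1)) by
          have h2 := congrArg F.1.1 h
          rw [Equiv.apply_symm_apply] at h2
          rw [h2, F.2])⟩,
      fun g => by simp [Fin.succ_pred], fun i => by simp [Fin.pred_succ]⟩,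
      fun a b h => by
        simp only [Equiv.coe_fn_mk]
        exact Fin.pred_le_pred_iff.mpr (F.1.2 a.1 b.1 h)⟩,
    fun G => ⟨⟨⟨fun a => if h : a = t then 0 else (G.1 ⟨a, h⟩).succ,
      fun i => if h : i = 0 then t else (G.1.symm (i.pred h)).1,
      fun a => by
        by_cases h : a = t
        · simp [h]
        · simp [h, Fin.succ_ne_zero, Fin.pred_succ]
      , fun i => by
        by_cases h : i = 0
        · simp [h]
        · simp only [dif_neg h, dif_neg (G.1.symm (i.pred h)).2]
          simp⟩,
      fun a b hab => by
        by_cases ha : a = t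
        · simp [ha]
        · have hb : b ≠ t := fun hb => ha (ht a (hb ▸ hab))
          simp only [Equiv.coe_fn_mk, dif_neg ha, dif_neg hb, Fin.succ_le_succ_iff]
          exact G.2 ⟨a, ha⟩ ⟨b, hb⟩ hab⟩,
      by simp⟩,
    fun F => by
      apply Subtype.ext; apply Subtype.ext; apply Equiv.ext
      intro a
      by_cases h : a = t
      · simp only [Equiv.coe_fn_mk, dif_pos h]
        rw [h, F.2]
      · simp [h, Fin.succ_pred],
    fun G => by
      apply Subtype.ext; apply Equiv.ext
      intro g
      have h1 : (if h : g.1 = t then (0 : Fin (k+1)) else (G.1 ⟨g.1, h⟩).succ)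
          = (G.1 g).succ := by rw [dif_neg g.2]
      simp only [Equiv.coe_fn_mk, h1, Fin.pred_succ]⟩

end Strip

section Machinery
variable {γ : Type} [Fintype γ] [DecidableEq γ]

lemma card_del_eq (t : γ) {k : ℕ} (hk : Fintype.card γ = k + 1) :
    Fintype.card {g : γ // g ≠ t} = k := by
  have h1 : Fintype.card {g : γ // ¬ g = t} = Fintype.card γ - Fintype.card {g : γ // g = t} :=
    Fintype.card_subtype_compl _
  rw [Fintype.card_subtype_eq, hk] at h1
  simpa using h1

lemma eDel_eq (R : PartialOrder γ) (t : γ) {k : ℕ} (hk : Fintype.card γ = k + 1) :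
    eDel γ R t = Nat.card (ExtA {g : γ // g ≠ t} (delOrder R t) k) := by
  unfold eDel
  exact eCount_eq_s12 _ _ (card_del_eq t hk)

lemma strip_full (R : PartialOrder γ) (t : γ) (ht : isMinimal R t) {k : ℕ}
    (hk : Fintype.card γ = k + 1) :
    Nat.card {f : ExtA γ R (k+1) // f.1 t = 0} = eDel γ R t := by
  rw [eDel_eq R t hk, card_strip R t ht k]

lemma ext_split (R : PartialOrder γ) (k : ℕ) (t : γ) :
    Nat.card (ExtA γ R (k+1)) = Nat.card {f : ExtA γ R (k+1) // f.1 t = 0}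
      + Nat.card {f : ExtA γ R (k+1) // ¬ f.1 t = 0} := by
  rw [← Nat.card_sum]
  exact Nat.card_congr (Equiv.sumCompl (fun f : ExtA γ R (k+1) => f.1 t = 0)).symm

lemma bottom_isMinimal (R : PartialOrder γ) (k : ℕ) (f : ExtA γ R (k+1)) :
    isMinimal R (f.1.symm 0) := by
  intro a ha
  have h1 := f.2 a _ ha
  rw [Equiv.apply_symm_apply] at h1
  have h2 : f.1 a = 0 := Fin.le_zero_iff.mp h1
  have := congrArg f.1.symm h2
  rwa [Equiv.symm_apply_apply] at this

lemma forced_bottom (R : PartialOrder γ) (t : γ) (ht : isMinimal R t)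
    (hall : ∀ g : γ, R.le t g) : eCount γ R = eDel γ R t := by
  obtain ⟨k, hk⟩ : ∃ k, Fintype.card γ = k + 1 := by
    have : 0 < Fintype.card γ := Fintype.card_pos_iff.mpr ⟨t⟩
    exact ⟨Fintype.card γ - 1, by omega⟩
  rw [eCount_eq_s12 γ R hk, ext_split R k t]
  have hzero : ∀ f : ExtA γ R (k+1), f.1 t = 0 := by
    intro f
    have h1 := f.2 t (f.1.symm 0) (hall _)
    rw [Equiv.apply_symm_apply] at h1
    exact Fin.le_zero_iff.mp h1
  have hempty : Nat.card {f : ExtA γ R (k+1) // ¬ f.1 t = 0} = 0 := by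
    have : IsEmpty {f : ExtA γ R (k+1) // ¬ f.1 t = 0} :=
      ⟨fun f => f.2 (hzero f.1)⟩
    exact Nat.card_of_isEmpty
  rw [hempty, strip_full R t ht hk]
  omega

lemma eCount_iso {γ' : Type} [Fintype γ'] [DecidableEq γ'] (R : PartialOrder γ)
    (R' : PartialOrder γ') (e : γ ≃ γ')
    (he : ∀ a b : γ, R.le a b ↔ R'.le (e a) (e b)) :
    eCount γ R = eCount γ' R' := by
  have hc : Fintype.card γ' = Fintype.card γ := (Fintype.card_congr e).symm
  rw [eCount_eq_s12 γ' R' hc]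
  apply Nat.card_congr
  refine ⟨fun f => ⟨e.symm.trans f.1, fun a b h => f.2 _ _ ?_⟩,
    fun g => ⟨e.trans g.1, fun a b h => g.2 _ _ ((he a b).mp h)⟩,
    fun f => Subtype.ext (by ext a; simp),
    fun g => Subtype.ext (by ext a; simp)⟩
  have := (he (e.symm a) (e.symm b))
  simp only [Equiv.apply_symm_apply] at this
  exact this.mpr h

lemma pwidth_le_two_iff (R : PartialOrder γ) : pwidth γ R ≤ 2 ↔
    ∀ s : Finset γ, (∀ a ∈ s, ∀ b ∈ s, a ≠ b → ¬ R.le a b) → s.card ≤ 2 := by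
  unfold pwidth
  rw [csSup_le_iff ?bdd ?ne]
  · constructor
    · rintro h s hs
      exact h _ ⟨s, hs, rfl⟩
    · rintro h n ⟨s, hs, rfl⟩
      exact h s hs
  case bdd =>
    refine ⟨Fintype.card γ, ?_⟩
    rintro n ⟨s, _, rfl⟩
    exact (Finset.card_le_univ s).trans (by simp)
  case ne =>
    exact ⟨0, ∅, by simp, by simp⟩

end Machinery

section Master
variable {γ : Type} [Fintype γ] [DecidableEq γ]

lemma master (R : PartialOrder γ) (z v : γ) (hzv : z ≠ v)
    (hz : isMinimal R z) (hv : isMinimal R v)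
    (honly : ∀ u : γ, isMinimal R u → u = z ∨ u = v) :
    eCount γ R = eDel γ R z + eDel γ R v := by
  obtain ⟨k, hk⟩ : ∃ k, Fintype.card γ = k + 1 := by
    have : 0 < Fintype.card γ := Fintype.card_pos_iff.mpr ⟨z⟩
    exact ⟨Fintype.card γ - 1, by omega⟩
  rw [eCount_eq_s12 γ R hk, ext_split R k z, strip_full R z hz hk]
  have hiff : ∀ f : ExtA γ R (k+1), (¬ f.1 z = 0) ↔ f.1 v = 0 := by
    intro f
    constructor
    · intro h
      rcases honly _ (bottom_isMinimal R k f) with h1 | h1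
      · exact absurd (by rw [← h1]; simp) h
      · rw [← h1]; simp
    · intro h0 hz0
      exact hzv (f.1.injective (hz0.trans h0.symm))
  rw [Nat.card_congr (Equiv.subtypeEquivRight hiff), strip_full R v hv hk]
end Master

def punitOrder : PartialOrder Unit where
  le _ _ := True
  lt _ _ := False
  lt_iff_le_not_ge := by simp
  le_refl _ := trivial
  le_trans _ _ _ _ _ := trivial
  le_antisymm a b _ _ := rfl

section OpB
variable {α : Type} [Fintype α] [DecidableEq α] (O : PartialOrder α) (x : α)

lemma opB_min_w : isMinimal (hybOrder O punitOrder x) (Sum.inr ()) := by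
  rintro (a | u) h
  · exact h.elim
  · rfl

lemma opB_min_x (hx : isMinimal O x) :
    isMinimal (hybOrder O punitOrder x) (Sum.inl x) := by
  rintro (a | u) h
  · exact congrArg Sum.inl (hx a h)
  · exact absurd (O.le_refl x) h

lemma opB_only (hx : isMinimal O x) : ∀ u : α ⊕ Unit,
    isMinimal (hybOrder O punitOrder x) u → u = Sum.inr () ∨ u = Sum.inl x := by
  rintro (a | u) hu
  · right
    by_cases hax : a = x
    · rw [hax]
    · have := hu (Sum.inr ()) (show ¬ O.le a x from fun hle => hax (hx a hle))
      exact nomatch this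
  · left; rfl

lemma opB_eDel_w : eDel (α ⊕ Unit) (hybOrder O punitOrder x) (Sum.inr ()) = eCount α O := by
  unfold eDel
  refine eCount_iso _ O ⟨fun s => Sum.elim id (fun _ => x) s.1,
    fun a => ⟨Sum.inl a, by simp⟩, ?_, ?_⟩ ?_
  · rintro ⟨a | u, h⟩
    · rfl
    · exact absurd (by cases u; rfl) h
  · intro a; rfl
  · rintro ⟨a | u, ha⟩ ⟨b | u', hb⟩
    · exact Iff.rfl
    · cases u'; exact absurd rfl hb
    · cases u; exact absurd rfl ha
    · cases u; exact absurd rfl ha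

lemma opB_eDel_x (hx : isMinimal O x) :
    eDel (α ⊕ Unit) (hybOrder O punitOrder x) (Sum.inl x) = eDel α O x := by
  unfold eDel
  rw [forced_bottom _ (⟨Sum.inr (), by simp⟩ : {s : α ⊕ Unit // s ≠ Sum.inl x}) ?hmin ?hall]
  case hmin =>
    rintro ⟨a | u, h⟩ hle
    · exact hle.elim
    · cases u; exact Subtype.ext rfl
  case hall =>
    rintro ⟨a | u, h⟩
    · exact show ¬ O.le a x from fun hle => h (congrArg Sum.inl (hx a hle))
    · cases u; exact trivial
  unfold eDel
  refine eCount_iso _ (delOrder O x)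
    ⟨?toFun, fun p => ⟨⟨Sum.inl p.1, fun e => p.2 (Sum.inl.inj e)⟩,
      fun e => by simp at e⟩, ?_, ?_⟩ ?_
  case toFun =>
    rintro ⟨⟨a | u, h⟩, h2⟩
    · exact ⟨a, fun e => h (congrArg Sum.inl e)⟩
    · exact absurd (Subtype.ext (by cases u; rfl)) h2
  · rintro ⟨⟨a | u, h⟩, h2⟩
    · rfl
    · exact absurd (Subtype.ext (by cases u; rfl)) h2
  · intro p; rfl
  · rintro ⟨⟨a | u, ha⟩, ha2⟩ ⟨⟨b | u', hb⟩, hb2⟩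
    · exact Iff.rfl
    · exact absurd (Subtype.ext (by cases u'; rfl)) hb2
    · exact absurd (Subtype.ext (by cases u; rfl)) ha2
    · exact absurd (Subtype.ext (by cases u; rfl)) ha2

lemma opB_eCount (hx : isMinimal O x) :
    eCount (α ⊕ Unit) (hybOrder O punitOrder x) = eCount α O + eDel α O x := by
  rw [master _ (Sum.inr ()) (Sum.inl x) (by simp) (opB_min_w O x) (opB_min_x O x hx)
    (opB_only O x hx), opB_eDel_w, opB_eDel_x O x hx]

lemma opB_width (hx : isMinimal O x) (hw : pwidth α O ≤ 2) :
    pwidth (α ⊕ Unit) (hybOrder O punitOrder x) ≤ 2 := by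
  rw [pwidth_le_two_iff] at hw ⊢
  intro s hs
  by_cases hmem : Sum.inr () ∈ s
  · have hsub : s ⊆ {Sum.inr (), Sum.inl x} := by
      intro u hu
      rcases u with a | u
      · by_cases hax : a = x
        · subst hax; simp
        · exact absurd (show ¬ O.le a x from fun hle => hax (hx a hle))
            (hs _ hmem _ hu (by simp))
      · cases u; simp
    exact (Finset.card_le_card hsub).trans (Finset.card_insert_le _ _|>.trans (by simp))
  · have hcard : (s.image (Sum.elim id fun _ => x)).card = s.card := by
      apply Finset.card_image_of_injOn
      rintro (a | u) hu (b | u') hv he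
      · simpa using he
      · cases u'; exact absurd hv hmem
      · cases u; exact absurd hu hmem
      · cases u; exact absurd hu hmem
    rw [← hcard]
    apply hw
    intro a ha b hb hab
    obtain ⟨u, hu, he⟩ := Finset.mem_image.mp ha
    obtain ⟨u', hu', he'⟩ := Finset.mem_image.mp hb
    rcases u with a0 | u0
    · rcases u' with b0 | u0'
      · simp only [Sum.elim_inl, id_eq] at he he'
        subst he he'
        exact hs _ hu _ hu' (fun e => hab (Sum.inl.inj e))
      · cases u0'; exact absurd hu' hmem
    · cases u0; exact absurd hu hmem

lemma opB_card : Fintype.card (α ⊕ Unit) = Fintype.card α + 1 := by simp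

end OpB

def opALE {α : Type} (O : PartialOrder α) (x : α) :
    {a : α // a ≠ x} ⊕ Bool → {a : α // a ≠ x} ⊕ Bool → Prop
  | .inl p, .inl q => O.le p.1 q.1
  | .inr false, .inl p => O.le x p.1
  | .inr true, .inl _ => True
  | .inl _, .inr _ => False
  | .inr b, .inr b' => b = b'

def opAOrder {α : Type} (O : PartialOrder α) (x : α) :
    PartialOrder ({a : α // a ≠ x} ⊕ Bool) where
  le := opALE O x
  lt a b := opALE O x a b ∧ ¬ opALE O x b a
  lt_iff_le_not_ge := fun _ _ => Iff.rfl
  le_refl := by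
    rintro (p | (_ | _))
    · exact O.le_refl _
    · exact rfl
    · exact rfl
  le_trans := by
    rintro (p | (_ | _)) (q | (_ | _)) (r | (_ | _)) h h' <;>
      first
        | exact h.elim
        | exact h'.elim
        | trivial
        | exact O.le_trans _ _ _ h h'
        | exact h
        | exact h'
        | exact Bool.noConfusion h
        | exact Bool.noConfusion h'
        | simp_all
  le_antisymm := by
    rintro (p | (_ | _)) (q | (_ | _)) h h' <;>
      first
        | exact h.elim
        | exact h'.elim
        | exact congrArg Sum.inl (Subtype.ext (O.le_antisymm _ _ h h'))
        | rfl
        | exact Bool.noConfusion h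
        | simp_all

section OpA
variable {α : Type} [Fintype α] [DecidableEq α] (O : PartialOrder α) (x : α)

lemma opA_min_z : isMinimal (opAOrder O x) (Sum.inr false) := by
  rintro (p | (_ | _)) h
  · exact h.elim
  · rfl
  · exact Bool.noConfusion h

lemma opA_min_v : isMinimal (opAOrder O x) (Sum.inr true) := by
  rintro (p | (_ | _)) h
  · exact h.elim
  · exact Bool.noConfusion h
  · rfl

lemma opA_only : ∀ u : {a : α // a ≠ x} ⊕ Bool,
    isMinimal (opAOrder O x) u → u = Sum.inr false ∨ u = Sum.inr true := by
  rintro (p | (_ | _)) hu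
  · exact nomatch (hu (Sum.inr true) trivial)
  · left; rfl
  · right; rfl

lemma opA_eDel_v (hx : isMinimal O x) :
    eDel _ (opAOrder O x) (Sum.inr true) = eCount α O := by
  unfold eDel
  refine eCount_iso _ O ⟨fun s => Sum.elim Subtype.val (fun _ => x) s.1,
    fun a => if h : a = x then ⟨Sum.inr false, by simp⟩ else ⟨Sum.inl ⟨a, h⟩, by simp⟩,
    ?_, ?_⟩ ?_
  · rintro ⟨p | (_ | _), h⟩
    · simp [p.2]
    · simp
    · exact absurd rfl h
  · intro a
    by_cases h : a = x
    · simp [h]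
    · simp [h]
  · rintro ⟨p | (_ | _), hs⟩ ⟨q | (_ | _), ht⟩
    · exact Iff.rfl
    · exact iff_of_false (fun h => h) (fun hle => p.2 (hx p.1 hle))
    · exact absurd rfl ht
    · exact Iff.rfl
    · exact iff_of_true rfl (O.le_refl x)
    · exact absurd rfl ht
    · exact absurd rfl hs
    · exact absurd rfl hs
    · exact absurd rfl hs

lemma opA_eDel_z (hx : isMinimal O x) :
    eDel _ (opAOrder O x) (Sum.inr false) = eDel α O x := by
  unfold eDel
  rw [forced_bottom _ (⟨Sum.inr true, by simp⟩ :
      {s : {a : α // a ≠ x} ⊕ Bool // s ≠ Sum.inr false}) ?hmin ?hall]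
  case hmin =>
    rintro ⟨p | (_ | _), h⟩ hle
    · exact hle.elim
    · exact absurd rfl h
    · exact Subtype.ext rfl
  case hall =>
    rintro ⟨p | (_ | _), h⟩
    · exact trivial
    · exact absurd rfl h
    · exact rfl
  unfold eDel
  refine eCount_iso _ (delOrder O x) ⟨?toFun,
    fun p => ⟨⟨Sum.inl p, by simp⟩, fun e => by simp at e⟩,
    ?_, ?_⟩ ?_
  case toFun =>
    rintro ⟨⟨p | (_ | _), h⟩, h2⟩
    · exact p
    · exact absurd rfl h
    · exact absurd (Subtype.ext rfl) h2
  · rintro ⟨⟨p | (_ | _), h⟩, h2⟩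
    · exact Subtype.ext (Subtype.ext rfl)
    · exact absurd rfl h
    · exact absurd (Subtype.ext rfl) h2
  · intro p; rfl
  · rintro ⟨⟨p | (_ | _), hs⟩, hs2⟩ ⟨⟨q | (_ | _), ht⟩, ht2⟩ <;>
      first
        | exact Iff.rfl
        | exact absurd rfl hs
        | exact absurd rfl ht
        | exact absurd (Subtype.ext rfl) hs2
        | exact absurd (Subtype.ext rfl) ht2

lemma opA_eCount (hx : isMinimal O x) :
    eCount _ (opAOrder O x) = eDel α O x + eCount α O := by
  rw [master _ (Sum.inr false) (Sum.inr true) (by simp) (opA_min_z O x) (opA_min_v O x)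
    (opA_only O x), opA_eDel_z O x hx, opA_eDel_v O x hx]

lemma opA_card : Fintype.card ({a : α // a ≠ x} ⊕ Bool) = Fintype.card α + 1 := by
  have h1 : Fintype.card {a : α // ¬ a = x} = Fintype.card α - Fintype.card {a : α // a = x} :=
    Fintype.card_subtype_compl _
  rw [Fintype.card_subtype_eq] at h1
  have h0 : 0 < Fintype.card α := Fintype.card_pos_iff.mpr ⟨x⟩
  have h2 : Fintype.card ({a : α // a ≠ x} ⊕ Bool) = Fintype.card {a : α // ¬ a = x} + 2 := by
    simp [Fintype.card_sum]
  omega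

lemma opA_width (hx : isMinimal O x) (hw : pwidth α O ≤ 2) :
    pwidth _ (opAOrder O x) ≤ 2 := by
  rw [pwidth_le_two_iff] at hw ⊢
  intro s hs
  by_cases hmem : Sum.inr true ∈ s
  · have hsub : s ⊆ {Sum.inr true, Sum.inr false} := by
      rintro (p | (_ | _)) hu
      · exact absurd trivial (hs _ hmem _ hu (by simp))
      · simp
      · simp
    exact (Finset.card_le_card hsub).trans (Finset.card_insert_le _ _|>.trans (by simp))
  · have hcard : (s.image (Sum.elim Subtype.val fun _ => x)).card = s.card := by
      apply Finset.card_image_of_injOn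
      rintro (p | (_ | _)) hu (q | (_ | _)) hv he <;>
        simp only [Sum.elim_inl, Sum.elim_inr] at he
      · exact congrArg Sum.inl (Subtype.ext he)
      · exact absurd he p.2
      · exact absurd hv hmem
      · exact absurd he.symm q.2
      · rfl
      · exact absurd hv hmem
      · exact absurd hu hmem
      · exact absurd hu hmem
      · exact absurd hu hmem
    rw [← hcard]
    apply hw
    intro a ha b hb hab
    obtain ⟨u, hu, he⟩ := Finset.mem_image.mp ha
    obtain ⟨u', hu', he'⟩ := Finset.mem_image.mp hb
    rcases u with p | (_ | _) <;> rcases u' with q | (_ | _) <;>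
      simp only [Sum.elim_inl, Sum.elim_inr] at he he' <;>
      first
        | exact absurd hu hmem
        | exact absurd hu' hmem
        | skip
    · subst he he'
      exact hs _ hu _ hu' (fun e => hab (congrArg (Sum.elim Subtype.val fun _ => x) e))
    · subst he he'
      exact fun hle => p.2 (hx p.1 hle)
    · subst he he'
      exact hs _ hu _ hu' (fun e => nomatch e)
    · subst he he'
      exact absurd rfl hab

end OpA

def seedOrder : PartialOrder Bool where
  le a b := a = b
  lt _ _ := False
  lt_iff_le_not_ge := by
    intro a b
    constructor
    · exact False.elim
    · rintro ⟨h1, h2⟩; exact h2 h1.symm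
  le_refl _ := rfl
  le_trans a b c h h' := by
    have h1 : a = b := h
    have h2 : b = c := h'
    exact h1.trans h2
  le_antisymm a b h _ := by exact h

lemma seed_min : isMinimal seedOrder false := by
  intro a h
  exact h

lemma seed_eCount : eCount Bool seedOrder = 2 := by
  unfold eCount
  have hall : ∀ f : Bool ≃ Fin (Fintype.card Bool),
      ∀ a b : Bool, seedOrder.le a b → f a ≤ f b := by
    intro f a b h
    have h1 : a = b := h
    rw [h1]
  rw [Nat.card_congr (Equiv.subtypeUnivEquiv hall), Nat.card_eq_fintype_card,
    Fintype.card_equiv (Fintype.equivFin Bool)]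
  decide

lemma seed_eDel : eDel Bool seedOrder false = 1 := by
  unfold eDel eCount
  have hall : ∀ f : {b : Bool // b ≠ false} ≃ Fin (Fintype.card {b : Bool // b ≠ false}),
      ∀ a b, (delOrder seedOrder false).le a b → f a ≤ f b := by
    intro f a b h
    have h1 : a.1 = b.1 := h
    rw [show a = b from Subtype.ext h1]
  rw [Nat.card_congr (Equiv.subtypeUnivEquiv hall), Nat.card_eq_fintype_card,
    Fintype.card_equiv (Fintype.equivFin _)]
  decide

lemma seed_width : pwidth Bool seedOrder ≤ 2 := by
  rw [pwidth_le_two_iff]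
  intro s _
  exact (Finset.card_le_univ s).trans (by simp)

lemma cfVal_cons_cons (a b : ℕ) (l : List ℕ) :
    cfVal (a :: b :: l) = (a : ℚ) + (cfVal (b :: l))⁻¹ := rfl

lemma cfVal_zero_cons (b : ℕ) (l : List ℕ) :
    cfVal (0 :: b :: l) = (cfVal (b :: l))⁻¹ := by
  rw [cfVal_cons_cons]; simp

lemma cfVal_bump (b : ℕ) (l : List ℕ) : cfVal ((b+1) :: l) = cfVal (b :: l) + 1 := by
  cases l with
  | nil => show ((b+1 : ℕ) : ℚ) = (b : ℚ) + 1; push_cast; ring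
  | cons c l' =>
    rw [cfVal_cons_cons, cfVal_cons_cons]
    push_cast; ring

lemma key : ∀ d : ℕ, ∀ c : ℕ, 1 ≤ c → c < d → Nat.Coprime c d →
    ∃ t : List ℕ, t ≠ [] ∧ (∀ b ∈ t, 1 ≤ b) ∧ (∀ b ∈ t.getLast?, 2 ≤ b) ∧
      cfVal (0 :: t) = (c : ℚ) / (d : ℚ) ∧
      ∃ (γ : Type) (F : Fintype γ) (D : DecidableEq γ) (R : PartialOrder γ) (x : γ),
        isMinimal R x ∧ @pwidth γ F R ≤ 2 ∧ @Fintype.card γ F = t.sum ∧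
        @eCount γ F R = d ∧ @eDel γ F D R x = c := by
  intro d
  induction d using Nat.strong_induction_on with
  | _ d IH =>
  intro c hc1 hcd hcop
  have hc0 : (c : ℚ) ≠ 0 := Nat.cast_ne_zero.mpr (by omega)
  have hd0 : (d : ℚ) ≠ 0 := Nat.cast_ne_zero.mpr (by omega)
  have hdcast : ((d - c : ℕ) : ℚ) = (d : ℚ) - (c : ℚ) := by
    push_cast [Nat.cast_sub (le_of_lt hcd)]; ring
  have hdcne : (d : ℚ) - (c : ℚ) ≠ 0 := by
    have : (c : ℚ) < (d : ℚ) := by exact_mod_cast hcd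
    intro h; linarith
  rcases lt_trichotomy (2*c) d with hlt | heq | hgt
  · -- Op A case: previous pair (c, d - c)
    have hcop' : Nat.Coprime c (d - c) :=
      ((Nat.coprime_sub_self_left (le_of_lt hcd)).mpr hcop.symm).symm
    obtain ⟨t, htne, hent, hlast, hval, γ, F, D, R, x, hmin, hwid, hcard, hec, hed⟩ :=
      IH (d - c) (by omega) c hc1 (by omega) hcop'
    obtain ⟨b₁, t₁, rfl⟩ := List.exists_cons_of_ne_nil htne
    refine ⟨(b₁+1) :: t₁, by simp, ?_, ?_, ?_, ?_⟩
    · intro b hb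
      rcases List.mem_cons.mp hb with h | h
      · omega
      · exact hent b (List.mem_cons_of_mem _ h)
    · cases t₁ with
      | nil =>
        intro b hb
        have h2 := hlast b₁ (by simp)
        simp at hb
        omega
      | cons c2 t2 =>
        rw [List.getLast?_cons_cons]
        intro b hb
        exact hlast b (by rw [List.getLast?_cons_cons]; exact hb)
    · rw [cfVal_zero_cons, cfVal_bump]
      have hprev := hval
      rw [cfVal_zero_cons, hdcast] at hprev
      have hval1 : cfVal (b₁ :: t₁) = ((d : ℚ) - c) / c := by
        rw [inv_eq_iff_eq_inv] at hprev
        rw [hprev, inv_div]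
      rw [hval1]
      have hsum : ((d : ℚ) - c)/c + 1 = (d : ℚ)/c := by
        field_simp
        ring
      rw [hsum, inv_div]
    · refine ⟨_, inferInstance, inferInstance, opAOrder R x, Sum.inr false,
        opA_min_z R x, opA_width R x hmin hwid, ?_, ?_, ?_⟩
      · rw [opA_card, hcard]
        simp only [List.sum_cons]
        omega
      · rw [opA_eCount R x hmin, hec, hed]
        omega
      · rw [opA_eDel_z R x hmin, hed]
  · -- seed case: c = 1, d = 2
    have hc : c = 1 := by
      have hdvd : c ∣ d := ⟨2, by omega⟩
      exact Nat.dvd_one.mp (hcop.gcd_eq_one ▸ Nat.dvd_gcd dvd_rfl hdvd)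
    have hd : d = 2 := by omega
    subst hc hd
    refine ⟨[2], by simp, by simp, by simp, ?_, Bool, inferInstance, inferInstance,
      seedOrder, false, seed_min, seed_width, by simp, seed_eCount, seed_eDel⟩
    rw [cfVal_zero_cons]
    show ((2:ℕ):ℚ)⁻¹ = 1/2
    norm_num
  · -- Op B case: previous pair (d - c, c)
    have hcop' : Nat.Coprime (d - c) c :=
      (Nat.coprime_sub_self_left (le_of_lt hcd)).mpr hcop.symm
    obtain ⟨t, htne, hent, hlast, hval, γ, F, D, R, x, hmin, hwid, hcard, hec, hed⟩ :=
      IH c hcd (d - c) (by omega) (by omega) hcop'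
    obtain ⟨b₁, t₁, rfl⟩ := List.exists_cons_of_ne_nil htne
    refine ⟨1 :: b₁ :: t₁, by simp, ?_, ?_, ?_, ?_⟩
    · intro b hb
      rcases List.mem_cons.mp hb with h | h
      · omega
      · exact hent b h
    · rw [List.getLast?_cons_cons]
      exact hlast
    · rw [cfVal_zero_cons, cfVal_cons_cons]
      have hprev := hval
      rw [cfVal_zero_cons, hdcast] at hprev
      rw [hprev]
      have hsum : ((1:ℕ) : ℚ) + ((d : ℚ) - c)/c = (d : ℚ)/c := by
        push_cast
        field_simp
        ring
      rw [hsum, inv_div]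
    · refine ⟨γ ⊕ Unit, inferInstance, inferInstance, hybOrder R punitOrder x, Sum.inr (),
        opB_min_w R x, opB_width R x hmin hwid, ?_, ?_, ?_⟩
      · rw [opB_card, hcard]
        simp only [List.sum_cons]
        omega
      · rw [opB_eCount R x hmin, hec, hed]
        omega
      · rw [opB_eDel_w]
        exact hec


/-- For every pair of coprime integers `1 ≤ c < d` there is a poset `P` of width
at most two with a minimal element `x` such that `|P| = s(c/d)` (the sum of the
partial quotients of the simple continued fraction of `c/d`), `e(P) = d` and
`e(P − x) = c`. -/
theorem cf_poset (c d : ℕ) (h1 : 1 ≤ c) (h2 : c < d) (hcd : Nat.Coprime c d) :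
    ∃ l : List ℕ, cfAdmissible l ∧ cfVal l = (c : ℚ) / (d : ℚ) ∧
      ∃ (α : Type) (F : Fintype α) (D : DecidableEq α)
        (O : PartialOrder α) (x : α),
          isMinimal O x ∧
          @pwidth α F O ≤ 2 ∧
          @Fintype.card α F = l.sum ∧
          @eCount α F O = d ∧
          @eDel α F D O x = c := by
  obtain ⟨t, htne, hent, hlast, hval, γ, F, D, R, x, hmin, hwid, hcard, hec, hed⟩ :=
    key d c h1 h2 hcd
  refine ⟨0 :: t, ⟨by simp, ?_, ?_⟩, hval, γ, F, D, R, x, hmin, hwid, ?_, hec, hed⟩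
  · rintro ⟨i, hilen⟩ hi
    cases i with
    | zero => simp at hi
    | succ j =>
      apply hent
      have : (0 :: t).get ⟨j + 1, hilen⟩ = t.get ⟨j, by simpa using hilen⟩ := rfl
      rw [this]
      exact List.get_mem t _
  · intro _ b hb
    obtain ⟨b₁, t₁, rfl⟩ := List.exists_cons_of_ne_nil htne
    rw [List.getLast?_cons_cons] at hb
    exact hlast b hb
  · rw [hcard, List.sum_cons]
    omega
end

section
/- Suppose that for every prime d there exists an integer 1 ≤ c < d and a poset P_d on at most C·log d elements with e(P_d) = d. Then for every integer n ≥ 2, there exists a poset P on at most C·log n elements with e(P) = n; i.e., μ(n) = O(log n). -/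
lemma eCount_linOrder_s16 {α β : Type} [Fintype α] [Fintype β]
    (O : PartialOrder α) (O' : PartialOrder β) :
    eCount (α ⊕ β) (linOrder O O') = eCount α O * eCount β O' := by
  classical
  have hN : Fintype.card (α ⊕ β) = Fintype.card α + Fintype.card β := Fintype.card_sum
  set m := Fintype.card α with hm
  set n := Fintype.card β with hn
  have val_inl : ∀ (g : α ≃ Fin m) (q : β ≃ Fin n) (a : α),
      (((Equiv.sumCongr g q).trans (finSumFinEquiv.trans (finCongr hN.symm))) (Sum.inl a)).val
        = (g a).val := by
    intro g q a; simp
  have val_inr : ∀ (g : α ≃ Fin m) (q : β ≃ Fin n) (b : β),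
      (((Equiv.sumCongr g q).trans (finSumFinEquiv.trans (finCongr hN.symm))) (Sum.inr b)).val
        = m + (q b).val := by
    intro g q b; simp
  let Φ : ({g : α ≃ Fin m // ∀ a b : α, O.le a b → g a ≤ g b} ×
           {g : β ≃ Fin n // ∀ a b : β, O'.le a b → g a ≤ g b}) →
      {f : (α ⊕ β) ≃ Fin (Fintype.card (α ⊕ β)) //
        ∀ a b : α ⊕ β, (linOrder O O').le a b → f a ≤ f b} := fun p =>
    ⟨(Equiv.sumCongr p.1.1 p.2.1).trans (finSumFinEquiv.trans (finCongr hN.symm)), by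
      rintro (a | a) (b | b) hle
      · simp only [Fin.le_def, val_inl]
        exact p.1.2 a b hle
      · have h1 : (p.1.1 a).val < m := (p.1.1 a).isLt
        simp only [Fin.le_def, val_inl, val_inr]
        omega
      · exact hle.elim
      · have h1 : (p.2.1 a).val ≤ (p.2.1 b).val := p.2.2 a b hle
        simp only [Fin.le_def, val_inl, val_inr]
        omega⟩
  have hbij : Function.Bijective Φ := by
    constructor
    · rintro ⟨⟨g1, hg1⟩, ⟨q1, hq1⟩⟩ ⟨⟨g2, hg2⟩, ⟨q2, hq2⟩⟩ hEq
      have hEq' := congrArg Subtype.val hEq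
      simp only [Φ] at hEq'
      have hgl : g1 = g2 := by
        ext a
        have := congrArg (fun (e : (α ⊕ β) ≃ Fin (Fintype.card (α ⊕ β))) => (e (Sum.inl a)).val) hEq'
        simpa [val_inl] using this
      have hql : q1 = q2 := by
        ext b
        have := congrArg (fun (e : (α ⊕ β) ≃ Fin (Fintype.card (α ⊕ β))) => (e (Sum.inr b)).val) hEq'
        simp only [val_inr] at this
        omega
      simp [hgl, hql]
    · rintro ⟨f, hf⟩
      -- claim 2: inr elements map to values ≥ m
      have claim2 : ∀ b : β, m ≤ (f (Sum.inr b)).val := by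
        by_contra hc
        push_neg at hc
        obtain ⟨b0, hb0⟩ := hc
        have hlt : ∀ a : α, (f (Sum.inl a)).val < (f (Sum.inr b0)).val := by
          intro a
          have hle : f (Sum.inl a) ≤ f (Sum.inr b0) := hf _ _ trivial
          have hne : (f (Sum.inl a)).val ≠ (f (Sum.inr b0)).val := fun hv => by
            cases f.injective (Fin.val_injective hv)
          exact lt_of_le_of_ne hle hne
        have hinj : Function.Injective
            (fun a : α => (⟨(f (Sum.inl a)).val, hlt a⟩ : Fin (f (Sum.inr b0)).val)) := by
          intro a1 a2 h12
          simp only [Fin.mk.injEq] at h12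
          have := f.injective (Fin.val_injective h12)
          exact Sum.inl.injEq a1 a2 ▸ this
        have := Fintype.card_le_of_injective _ hinj
        simp only [Fintype.card_fin] at this
        omega
      -- claim 1: inl elements map to values < m
      have claim1 : ∀ a : α, (f (Sum.inl a)).val < m := by
        by_contra hc
        push_neg at hc
        obtain ⟨a0, ha0⟩ := hc
        set s := (f (Sum.inl a0)).val with hs
        have hslt : s < m + n := hN ▸ (f (Sum.inl a0)).isLt
        have hbig : ∀ b : β, s < (f (Sum.inr b)).val := by
          intro b
          have hle : f (Sum.inl a0) ≤ f (Sum.inr b) := hf _ _ trivial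
          have hne : (f (Sum.inl a0)).val ≠ (f (Sum.inr b)).val := fun hv => by
            cases f.injective (Fin.val_injective hv)
          exact lt_of_le_of_ne hle hne
        have hbnd : ∀ b : β, (f (Sum.inr b)).val - (s + 1) < m + n - (s + 1) := by
          intro b
          have h1 := hbig b
          have h2 : (f (Sum.inr b)).val < m + n := hN ▸ (f (Sum.inr b)).isLt
          omega
        have hinj : Function.Injective
            (fun b : β => (⟨(f (Sum.inr b)).val - (s + 1), hbnd b⟩ : Fin (m + n - (s + 1)))) := by
          intro b1 b2 h12
          simp only [Fin.mk.injEq] at h12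
          have e1 := hbig b1
          have e2 := hbig b2
          have hv : (f (Sum.inr b1)).val = (f (Sum.inr b2)).val := by omega
          have := f.injective (Fin.val_injective hv)
          exact Sum.inr.injEq b1 b2 ▸ this
        have := Fintype.card_le_of_injective _ hinj
        simp only [Fintype.card_fin] at this
        omega
      -- build the components
      have hginj : Function.Injective (fun a : α => (⟨(f (Sum.inl a)).val, claim1 a⟩ : Fin m)) := by
        intro a1 a2 h12
        simp only [Fin.mk.injEq] at h12
        have := f.injective (Fin.val_injective h12)
        exact Sum.inl.injEq a1 a2 ▸ this
      have hvlt : ∀ b : β, (f (Sum.inr b)).val - m < n := by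
        intro b
        have h2 : (f (Sum.inr b)).val < m + n := hN ▸ (f (Sum.inr b)).isLt
        have := claim2 b
        omega
      have hqinj : Function.Injective (fun b : β => (⟨(f (Sum.inr b)).val - m, hvlt b⟩ : Fin n)) := by
        intro b1 b2 h12
        simp only [Fin.mk.injEq] at h12
        have e1 := claim2 b1
        have e2 := claim2 b2
        have hv : (f (Sum.inr b1)).val = (f (Sum.inr b2)).val := by omega
        have := f.injective (Fin.val_injective hv)
        exact Sum.inr.injEq b1 b2 ▸ this
      have hgbij : Function.Bijective (fun a : α => (⟨(f (Sum.inl a)).val, claim1 a⟩ : Fin m)) :=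
        (Fintype.bijective_iff_injective_and_card _).mpr ⟨hginj, by simp [hm]⟩
      have hqbij : Function.Bijective (fun b : β => (⟨(f (Sum.inr b)).val - m, hvlt b⟩ : Fin n)) :=
        (Fintype.bijective_iff_injective_and_card _).mpr ⟨hqinj, by simp [hn]⟩
      refine ⟨⟨⟨Equiv.ofBijective _ hgbij, ?_⟩, ⟨Equiv.ofBijective _ hqbij, ?_⟩⟩, ?_⟩
      · intro a b hab
        show (f (Sum.inl a)).val ≤ (f (Sum.inl b)).val
        exact hf _ _ hab
      · intro a b hab
        have hle : (f (Sum.inr a)).val ≤ (f (Sum.inr b)).val := hf _ _ hab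
        show (f (Sum.inr a)).val - m ≤ (f (Sum.inr b)).val - m
        omega
      · apply Subtype.ext
        simp only [Φ]
        apply Equiv.ext
        rintro (a | b)
        · apply Fin.ext
          rw [val_inl]
          rfl
        · apply Fin.ext
          rw [val_inr]
          have := claim2 b
          show m + ((f (Sum.inr b)).val - m) = _
          omega
  rw [show eCount (α ⊕ β) (linOrder O O') = Nat.card _ from rfl,
      show eCount α O = Nat.card _ from rfl, show eCount β O' = Nat.card _ from rfl]
  rw [← Nat.card_prod]
  exact (Nat.card_eq_of_bijective Φ hbij).symm

/-- If for every prime `d` there is `1 ≤ c < d` and a poset on at most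
`C·log d` elements with exactly `d` linear extensions, then for every `n ≥ 2`
there is a poset on at most `C·log n` elements with exactly `n` linear
extensions (i.e. `μ(n) = O(log n)`). -/
theorem mu_log_from_primes (C : ℝ)
    (h : ∀ d : ℕ, d.Prime → ∃ c : ℕ, 1 ≤ c ∧ c < d ∧
      ∃ (α : Type) (F : Fintype α) (O : PartialOrder α),
        (@Fintype.card α F : ℝ) ≤ C * Real.log d ∧ @eCount α F O = d) :
    ∀ n : ℕ, 2 ≤ n →
      ∃ (α : Type) (F : Fintype α) (O : PartialOrder α),
        (@Fintype.card α F : ℝ) ≤ C * Real.log n ∧ @eCount α F O = n := by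
  intro n
  induction n using Nat.strong_induction_on with
  | _ n IH =>
    intro hn
    by_cases hp : n.Prime
    · obtain ⟨c, -, -, α, F, O, hcard, he⟩ := h n hp
      exact ⟨α, F, O, hcard, he⟩
    · obtain ⟨a, hdvd, ha2, haltn⟩ := Nat.exists_dvd_of_not_prime2 hn hp
      set b := n / a with hbdef
      have hab : a * b = n := Nat.mul_div_cancel' hdvd
      have hb1 : 1 ≤ b := by
        rcases Nat.eq_zero_or_pos b with h0 | h0
        · rw [h0, Nat.mul_zero] at hab; omega
        · exact h0
      have hb2 : 2 ≤ b := by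
        by_contra h0
        have hb1' : b = 1 := by omega
        rw [hb1', Nat.mul_one] at hab
        omega
      have hbn : b < n := by
        have h2b : 2 * b ≤ a * b := Nat.mul_le_mul_right b ha2
        omega
      obtain ⟨α, Fα, Oα, hcα, heα⟩ := IH a haltn ha2
      obtain ⟨β, Fβ, Oβ, hcβ, heβ⟩ := IH b hbn hb2
      letI := Fα
      letI := Fβ
      refine ⟨α ⊕ β, inferInstance, linOrder Oα Oβ, ?_, ?_⟩
      · have hcs : (Fintype.card (α ⊕ β) : ℝ) = Fintype.card α + Fintype.card β := by
          rw [Fintype.card_sum]; push_cast; ring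
        have hlog : Real.log n = Real.log a + Real.log b := by
          rw [← hab]
          push_cast
          rw [Real.log_mul (by positivity) (by positivity)]
        rw [hcs, hlog]
        nlinarith [hcα, hcβ]
      · rw [eCount_linOrder_s16, heα, heβ, hab]
end
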